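/- arXiv:1511.03237 — 7 statements merged into one kernel-verified Lean document; each statement's English description precedes it below -/
import Mathlib

section
/- Let d be a positive integer with d | n. Then every unit-step walk of Gaussian integers realizing the difference n also realizes the difference d. In other words, if d divides n then d ∈ A_n. -/
namespace Stmt5

abbrev V : Type := ℤ × ℤ

def IsStep (v : V) : Prop := v = (1,0) ∨ v = (-1,0) ∨ v = (0,1) ∨ v = (0,-1)

lemma IsStep.cases {v : V} (h : IsStep v) :
    (v.2 = 0 ∧ (v.1 = 1 ∨ v.1 = -1)) ∨ (v.1 = 0 ∧ (v.2 = 1 ∨ v.2 = -1)) := by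
  rcases h with h|h|h|h <;> subst h <;> simp

lemma isStep_of_comp {v : V} (h : (v.2 = 0 ∧ (v.1 = 1 ∨ v.1 = -1)) ∨ (v.1 = 0 ∧ (v.2 = 1 ∨ v.2 = -1))) :
    IsStep v := by
  obtain ⟨a, b⟩ := v
  rcases h with ⟨h1, h2|h2⟩|⟨h1, h2|h2⟩ <;> simp_all [IsStep]

lemma isStep_iff {v : V} : IsStep v ↔
    ((v.2 = 0 ∧ (v.1 = 1 ∨ v.1 = -1)) ∨ (v.1 = 0 ∧ (v.2 = 1 ∨ v.2 = -1))) :=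
  ⟨IsStep.cases, isStep_of_comp⟩

structure Data where
  L : ℕ
  d : ℤ
  c : ℤ
  B : ℕ → V
  hL : 1 ≤ L
  hd : 1 ≤ d
  hdc : d ∣ c
  hc : 2*d ≤ |c|
  h0 : B 0 = (0,0)
  hE : B L = (c, 0)
  hstep : ∀ i, i < L → IsStep (B (i+1) - B i)
  hsimp : ∀ i j, i < L → j < L → (B i).2 = (B j).2 → d ∣ ((B i).1 - (B j).1) → i = j

namespace Data

variable (D : Data)

lemma hL0 : (0:ℤ) < (D.L:ℤ) := by exact_mod_cast D.hL

/-- periodic extension -/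
def P (t : ℤ) : V :=
  ((D.B (t % (D.L:ℤ)).toNat).1 + (t / (D.L:ℤ)) * D.c, (D.B (t % (D.L:ℤ)).toNat).2)

def s (t : ℤ) : V := D.P (t+1) - D.P t

lemma P_eq (q : ℤ) (i : ℕ) (hi : i < D.L) :
    D.P ((i:ℤ) + q * D.L) = ((D.B i).1 + q * D.c, (D.B i).2) := by
  have h1 : ((i:ℤ) + q * D.L) % (D.L:ℤ) = i := by
    rw [Int.add_mul_emod_self_right]
    exact Int.emod_eq_of_lt (by positivity) (by exact_mod_cast hi)
  have h2 : ((i:ℤ) + q * D.L) / (D.L:ℤ) = q := by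
    rw [Int.add_mul_ediv_right _ _ (ne_of_gt D.hL0)]
    rw [Int.ediv_eq_zero_of_lt (by positivity) (by exact_mod_cast hi)]
    ring
  simp only [P, h1, h2]
  norm_num

lemma P_decomp (t : ℤ) : ∃ (q : ℤ) (i : ℕ), i < D.L ∧ t = (i:ℤ) + q * D.L := by
  refine ⟨t / D.L, (t % (D.L:ℤ)).toNat, ?_, ?_⟩
  · have h := Int.emod_lt_of_pos t D.hL0
    have h2 := Int.emod_nonneg t (ne_of_gt D.hL0)
    omega
  · have h2 := Int.emod_nonneg t (ne_of_gt D.hL0)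
    have h3 := Int.toNat_of_nonneg h2
    have h4 := Int.mul_ediv_add_emod t (D.L:ℤ)
    rw [h3, mul_comm]
    omega

lemma P_ofNat (i : ℕ) (hi : i ≤ D.L) : D.P i = D.B i := by
  rcases Nat.lt_or_ge i D.L with h | h
  · have := D.P_eq 0 i h
    simpa using this
  · have hiL : i = D.L := le_antisymm hi h
    have e1 : ((i:ℕ):ℤ) = ((0:ℕ):ℤ) + 1 * D.L := by rw [hiL]; push_cast; ring
    rw [e1, D.P_eq 1 0 (by exact_mod_cast D.hL), D.h0, hiL, D.hE]
    norm_num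

lemma P_zero : D.P 0 = (0, 0) := by
  have := D.P_ofNat 0 (Nat.zero_le _)
  simpa [D.h0] using this

lemma P_periodZ (t q : ℤ) : D.P (t + q * D.L) = ((D.P t).1 + q * D.c, (D.P t).2) := by
  obtain ⟨q0, i, hi, rfl⟩ := D.P_decomp t
  rw [show (i:ℤ) + q0 * D.L + q * D.L = (i:ℤ) + (q0 + q) * D.L by ring]
  rw [D.P_eq _ i hi, D.P_eq _ i hi]
  simp only [Prod.mk.injEq]
  exact ⟨by ring, by trivial⟩

lemma P_step (t : ℤ) : IsStep (D.s t) := by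
  obtain ⟨q, i, hi, rfl⟩ := D.P_decomp t
  unfold s
  rcases Nat.lt_or_ge (i+1) D.L with h | h
  · have e1 : (i:ℤ) + q * D.L + 1 = ((i+1:ℕ):ℤ) + q * D.L := by push_cast; ring
    rw [e1, D.P_eq q _ h, D.P_eq q _ hi]
    have hs := D.hstep i hi
    convert hs using 1
    rw [Prod.ext_iff]
    refine ⟨by simp; try ring, by simp⟩
  · have hiL : i + 1 = D.L := by omega
    have hh : ((i:ℤ)) + 1 = (D.L:ℤ) := by exact_mod_cast hiL
    have e1 : (i:ℤ) + q * D.L + 1 = ((0:ℕ):ℤ) + (q+1) * D.L := by push_cast; rw [← hh]; ring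
    rw [e1, D.P_eq (q+1) 0 (by exact_mod_cast D.hL), D.P_eq q i hi]
    have hs := D.hstep i hi
    rw [hiL, D.hE] at hs
    convert hs using 1
    rw [Prod.ext_iff]
    refine ⟨by simp [D.h0]; try ring, by simp [D.h0]⟩

lemma s_periodZ (t q : ℤ) : D.s (t + q * D.L) = D.s t := by
  unfold s
  rw [show t + q * D.L + 1 = (t+1) + q * D.L by ring]
  rw [D.P_periodZ t q, D.P_periodZ (t+1) q]
  rw [Prod.ext_iff]
  refine ⟨?_, ?_⟩ <;> simp

lemma P_simple (a b : ℤ) (hrow : (D.P a).2 = (D.P b).2)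
    (hcol : D.d ∣ ((D.P a).1 - (D.P b).1)) : (D.L:ℤ) ∣ a - b := by
  obtain ⟨qa, ia, hia, rfl⟩ := D.P_decomp a
  obtain ⟨qb, ib, hib, rfl⟩ := D.P_decomp b
  rw [D.P_eq qa ia hia, D.P_eq qb ib hib] at hrow hcol
  simp only at hrow hcol
  have hcol' : D.d ∣ ((D.B ia).1 - (D.B ib).1) := by
    have h1 : D.d ∣ (qa - qb) * D.c := Dvd.dvd.mul_left D.hdc _
    have e : (D.B ia).1 + qa * D.c - ((D.B ib).1 + qb * D.c)
        = ((D.B ia).1 - (D.B ib).1) + (qa - qb) * D.c := by ring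
    rw [e] at hcol
    exact (dvd_add_right h1).mp (by rwa [add_comm] at hcol)
  have := D.hsimp ia ib hia hib hrow hcol'
  subst this
  exact ⟨qa - qb, by ring⟩

lemma noBacktrack (hL3 : 3 ≤ D.L) (t : ℤ) : D.s (t+1) ≠ -(D.s t) := by
  intro h
  have hP : D.P (t+2) = D.P t := by
    have h1 : D.P (t+2) - D.P (t+1) = -(D.P (t+1) - D.P t) := by
      have h2 := h; unfold s at h2; rw [show t+1+1 = t+2 by ring] at h2; exact h2
    apply sub_eq_zero.mp
    have e : D.P (t+2) - D.P t = (D.P (t+2) - D.P (t+1)) + (D.P (t+1) - D.P t) := by ring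
    rw [e, h1]; ring
  have h2 : (D.L:ℤ) ∣ (t+2) - t := D.P_simple _ _ (by rw [hP]) (by rw [hP]; simp)
  have h3 : (D.L:ℤ) ∣ 2 := by simpa using h2
  have := Int.le_of_dvd (by norm_num) h3
  omega

lemma P1_succ (t : ℤ) : (D.P (t+1)).1 = (D.P t).1 + (D.s t).1 := by
  unfold s; rw [Prod.fst_sub]; ring

lemma P2_succ (t : ℤ) : (D.P (t+1)).2 = (D.P t).2 + (D.s t).2 := by
  unfold s; rw [Prod.snd_sub]; ring

end Data

lemma dvd_small_eq {n a : ℤ} (h : n ∣ a) (h2 : |a| < n) : a = 0 := by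
  by_contra ha
  have h3 : n ∣ |a| := (dvd_abs n a).mpr h
  have := Int.le_of_dvd (abs_pos.mpr ha) h3
  omega

lemma horiz_form {v : V} (h : IsStep v) (h2 : v.2 = 0) : v = (1,0) ∨ v = (-1,0) := by
  rcases h with h|h|h|h <;> subst h <;> simp_all

lemma vert_form {v : V} (h : IsStep v) (h2 : v.2 ≠ 0) : v = (0,1) ∨ v = (0,-1) := by
  rcases h with h|h|h|h <;> subst h <;> simp_all

namespace Data

variable (D : Data)

/-- Rotation of the periodic walk, rebased at `D.P t₀`. -/
def rot (t₀ : ℤ) : Data where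
  L := D.L
  d := D.d
  c := D.c
  B := fun i => D.P (t₀ + i) - D.P t₀
  hL := D.hL
  hd := D.hd
  hdc := D.hdc
  hc := D.hc
  h0 := by simp; rfl
  hE := by
    show D.P (t₀ + (D.L:ℕ)) - D.P t₀ = (D.c, 0)
    have h := D.P_periodZ t₀ 1
    rw [show t₀ + ((D.L:ℕ):ℤ) = t₀ + 1 * D.L by push_cast; ring, h]
    rw [Prod.ext_iff, Prod.fst_sub, Prod.snd_sub]
    constructor <;> simp
  hstep := by
    intro i _
    show IsStep ((D.P (t₀ + ((i:ℕ)+1:ℕ)) - D.P t₀) - (D.P (t₀ + i) - D.P t₀))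
    have e : (D.P (t₀ + ((i:ℕ)+1:ℕ)) - D.P t₀) - (D.P (t₀ + i) - D.P t₀) = D.s (t₀ + i) := by
      rw [sub_sub_sub_cancel_right]
      unfold s
      congr 1
      push_cast; ring
    rw [e]
    exact D.P_step _
  hsimp := by
    intro i j hi hj hrow hcol
    replace hrow : (D.P (t₀ + i) - D.P t₀).2 = (D.P (t₀ + j) - D.P t₀).2 := hrow
    replace hcol : D.d ∣ ((D.P (t₀ + i) - D.P t₀).1 - (D.P (t₀ + j) - D.P t₀).1) := hcol
    rw [Prod.snd_sub, Prod.snd_sub] at hrow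
    rw [Prod.fst_sub, Prod.fst_sub] at hcol
    have hrow' : (D.P (t₀ + i)).2 = (D.P (t₀ + j)).2 := by omega
    have hcol' : D.d ∣ ((D.P (t₀ + i)).1 - (D.P (t₀ + j)).1) := by
      have e : (D.P (t₀ + i)).1 - (D.P (t₀ + j)).1
          = ((D.P (t₀ + i)).1 - (D.P t₀).1) - ((D.P (t₀ + j)).1 - (D.P t₀).1) := by ring
      rw [e]; exact hcol
    have hdvd := D.P_simple _ _ hrow' hcol'
    have e2 : (t₀ + i) - (t₀ + j) = (i:ℤ) - j := by ring
    rw [e2] at hdvd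
    have h0 : ((i:ℤ) - j) = 0 := dvd_small_eq hdvd (by rw [abs_lt]; constructor <;> [omega; omega])
    omega

lemma rot_B (t₀ : ℤ) (i : ℕ) : (D.rot t₀).B i = D.P (t₀ + i) - D.P t₀ := rfl
lemma rot_L (t₀ : ℤ) : (D.rot t₀).L = D.L := rfl

/-- Reflection in the x-direction. -/
def refl : Data where
  L := D.L
  d := D.d
  c := -D.c
  B := fun i => (-(D.B i).1, (D.B i).2)
  hL := D.hL
  hd := D.hd
  hdc := dvd_neg.mpr D.hdc
  hc := by rw [abs_neg]; exact D.hc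
  h0 := by show (-(D.B 0).1, (D.B 0).2) = ((0:ℤ), (0:ℤ)); rw [D.h0]; norm_num
  hE := by show (-(D.B D.L).1, (D.B D.L).2) = (-D.c, (0:ℤ)); rw [D.hE]
  hstep := by
    intro i hi
    have hs := (D.hstep i hi).cases
    apply isStep_of_comp
    show ((((-(D.B (i+1)).1, (D.B (i+1)).2) : V) - (-(D.B i).1, (D.B i).2)).2 = 0 ∧ _) ∨ _
    rw [Prod.fst_sub, Prod.snd_sub] at hs ⊢
    simp only at hs ⊢
    omega
  hsimp := by
    intro i j hi hj hrow hcol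
    replace hrow : ((-(D.B i).1, (D.B i).2) : V).2 = ((-(D.B j).1, (D.B j).2) : V).2 := hrow
    replace hcol : D.d ∣ (((-(D.B i).1, (D.B i).2) : V).1 - ((-(D.B j).1, (D.B j).2) : V).1) := hcol
    simp only at hrow hcol
    refine D.hsimp i j hi hj hrow ?_
    have e : (D.B i).1 - (D.B j).1 = -((-(D.B i).1) - (-(D.B j).1)) := by ring
    rw [e]
    exact dvd_neg.mpr hcol

lemma refl_P (t : ℤ) : D.refl.P t = (-(D.P t).1, (D.P t).2) := by
  show ((_ : ℤ), (_:ℤ)) = _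
  unfold P
  rw [Prod.ext_iff]
  constructor
  · show -(D.B _).1 + (t / ((D.refl.L:ℕ):ℤ)) * (-D.c) = -((D.B _).1 + _)
    have : D.refl.L = D.L := rfl
    rw [this]; ring
  · rfl

lemma refl_s (t : ℤ) : D.refl.s t = (-(D.s t).1, (D.s t).2) := by
  unfold s
  rw [D.refl_P, D.refl_P, Prod.ext_iff, Prod.fst_sub, Prod.snd_sub, Prod.fst_sub, Prod.snd_sub]
  constructor
  · simp only; ring
  · simp only

/-- A cap: step up, `w ≥ 1` horizontal steps in direction σ, step down. -/
def Cap (t₀ : ℤ) (w : ℕ) (σ : ℤ) : Prop :=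
  1 ≤ w ∧ (σ = 1 ∨ σ = -1) ∧ D.s t₀ = (0,1) ∧
  (∀ j:ℕ, 1 ≤ j → j ≤ w → D.s (t₀ + j) = (σ, 0)) ∧ D.s (t₀ + w + 1) = (0,-1)

def Blocked (t₀ : ℤ) (w : ℕ) (σ : ℤ) : Prop :=
  ∃ m : ℤ, ∃ j : ℕ, 1 ≤ j ∧ j < w ∧ (D.P m).2 = (D.P t₀).2 ∧
    D.d ∣ ((D.P m).1 - ((D.P t₀).1 + j * σ))

lemma exists_shift_back (ν τ : ℤ) : ∃ l : ℕ, D.s (τ - l) = D.s ν := by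
  refine ⟨((τ - ν) % (D.L:ℤ)).toNat, ?_⟩
  have h2 := Int.emod_nonneg (τ - ν) (ne_of_gt D.hL0)
  have h4 := Int.mul_ediv_add_emod (τ - ν) (D.L:ℤ)
  rw [Int.toNat_of_nonneg h2]
  have e : τ - (τ - ν) % (D.L:ℤ) = ν + ((τ - ν) / D.L) * (D.L:ℤ) := by
    have h5 : (D.L:ℤ) * ((τ - ν) / (D.L:ℤ)) = ((τ - ν) / (D.L:ℤ)) * D.L := mul_comm _ _
    omega
  rw [e, D.s_periodZ]

lemma exists_shift_fwd (ν τ : ℤ) : ∃ l : ℕ, D.s (τ + l) = D.s ν := by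
  refine ⟨((ν - τ) % (D.L:ℤ)).toNat, ?_⟩
  have h2 := Int.emod_nonneg (ν - τ) (ne_of_gt D.hL0)
  have h4 := Int.mul_ediv_add_emod (ν - τ) (D.L:ℤ)
  rw [Int.toNat_of_nonneg h2]
  have e : τ + (ν - τ) % (D.L:ℤ) = ν + (-((ν - τ) / D.L)) * (D.L:ℤ) := by
    have h5 : (D.L:ℤ) * ((ν - τ) / (D.L:ℤ)) = ((ν - τ) / (D.L:ℤ)) * D.L := mul_comm _ _
    have h6 : (-((ν - τ) / D.L)) * (D.L:ℤ) = -(((ν - τ) / D.L) * (D.L:ℤ)) := by ring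
    omega
  rw [e, D.s_periodZ]

lemma runAround {ν : ℤ} (hν : (D.s ν).2 ≠ 0) (τ : ℤ) :
    ∃ m₁ m₂ : ℤ, m₁ ≤ τ ∧ τ ≤ m₂ ∧
      (∀ x, m₁ ≤ x → x < m₂ → (D.s x).2 = 0) ∧
      (D.s (m₁-1)).2 ≠ 0 ∧ (D.s m₂).2 ≠ 0 := by
  classical
  obtain ⟨lb0, hlb0⟩ := D.exists_shift_back ν (τ - 1)
  obtain ⟨lf0, hlf0⟩ := D.exists_shift_fwd ν τ
  have hb : ∃ l : ℕ, (D.s (τ - 1 - l)).2 ≠ 0 := ⟨lb0, by rw [hlb0]; exact hν⟩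
  have hf : ∃ l : ℕ, (D.s (τ + l)).2 ≠ 0 := ⟨lf0, by rw [hlf0]; exact hν⟩
  refine ⟨τ - Nat.find hb, τ + Nat.find hf, by omega, by omega, ?_, ?_, ?_⟩
  · intro x hx1 hx2
    rcases lt_or_ge x τ with h | h
    · have hl' : (τ - 1 - x).toNat < Nat.find hb := by omega
      have hm := Nat.find_min hb hl'
      have e : τ - 1 - ((τ - 1 - x).toNat : ℤ) = x := by omega
      rw [e] at hm
      exact not_not.mp hm
    · have hl' : (x - τ).toNat < Nat.find hf := by omega
      have hm := Nat.find_min hf hl'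
      have e : τ + ((x - τ).toNat : ℤ) = x := by omega
      rw [e] at hm
      exact not_not.mp hm
  · have h := Nat.find_spec hb
    have e : τ - (Nat.find hb : ℤ) - 1 = τ - 1 - (Nat.find hb : ℤ) := by ring
    rw [e]; exact h
  · exact Nat.find_spec hf

lemma run_row {m₁ m₂ : ℤ} (hhoriz : ∀ x, m₁ ≤ x → x < m₂ → (D.s x).2 = 0) :
    ∀ x, m₁ ≤ x → x ≤ m₂ → (D.P x).2 = (D.P m₁).2 := by
  intro x hx
  refine Int.le_induction (motive := fun y _ => y ≤ m₂ → (D.P y).2 = (D.P m₁).2) (fun _ => rfl)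
    (fun n hn ih hn2 => ?_) x hx
  rw [D.P2_succ, hhoriz n hn (by omega), ih (by omega)]
  ring

lemma run_dir (hL3 : 3 ≤ D.L) {m₁ m₂ : ℤ} (hhoriz : ∀ x, m₁ ≤ x → x < m₂ → (D.s x).2 = 0) :
    ∀ x, m₁ ≤ x → x < m₂ → D.s x = D.s m₁ := by
  intro x hx
  refine Int.le_induction (motive := fun y _ => y < m₂ → D.s y = D.s m₁) (fun _ => rfl)
    (fun n hn ih hn2 => ?_) x hx
  · have h1 : D.s n = D.s m₁ := ih (by omega)
    have hn' : (D.s n).2 = 0 := hhoriz n hn (by omega)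
    have hsn : (D.s (n+1)).2 = 0 := hhoriz (n+1) (by omega) hn2
    have c1 := horiz_form (D.P_step n) hn'
    have c2 := horiz_form (D.P_step (n+1)) hsn
    rcases c1 with e1|e1 <;> rcases c2 with e2|e2
    · rw [e2, ← e1, h1]
    · exact absurd (by rw [e2, e1, Prod.neg_mk]; norm_num : D.s (n+1) = -(D.s n))
        (D.noBacktrack hL3 n)
    · exact absurd (by rw [e2, e1, Prod.neg_mk]; norm_num : D.s (n+1) = -(D.s n))
        (D.noBacktrack hL3 n)
    · rw [e2, ← e1, h1]

lemma run_affine {m₁ m₂ : ℤ} (hdir : ∀ x, m₁ ≤ x → x < m₂ → D.s x = D.s m₁) :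
    ∀ x, m₁ ≤ x → x ≤ m₂ → (D.P x).1 = (D.P m₁).1 + (x - m₁) * (D.s m₁).1 := by
  intro x hx
  refine Int.le_induction (motive := fun y _ => y ≤ m₂ → (D.P y).1 = (D.P m₁).1 + (y - m₁) * (D.s m₁).1)
    (fun _ => by ring) (fun n hn ih hn2 => ?_) x hx
  rw [D.P1_succ, hdir n hn (by omega), ih (by omega)]
  ring

section CapFacts

variable {D} {t₀ : ℤ} {w : ℕ} {σ : ℤ} (hcap : D.Cap t₀ w σ)
include hcap

lemma cap_val : ∀ j : ℕ, j ≤ w →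
    (D.P (t₀ + 1 + j)).1 = (D.P t₀).1 + j * σ ∧ (D.P (t₀ + 1 + j)).2 = (D.P t₀).2 + 1 := by
  obtain ⟨hw, hσ, h1, hrun, h2⟩ := hcap
  intro j hj
  induction j with
  | zero =>
    constructor
    · rw [show t₀ + 1 + ((0:ℕ):ℤ) = t₀ + 1 by push_cast; ring, D.P1_succ, h1]
      try norm_num
    · rw [show t₀ + 1 + ((0:ℕ):ℤ) = t₀ + 1 by push_cast; ring, D.P2_succ, h1]
      try norm_num
  | succ k ih =>
    have hk : k ≤ w := by omega
    obtain ⟨hv1, hv2⟩ := ih hk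
    have hs : D.s (t₀ + 1 + k) = (σ, 0) := by
      have h := hrun (k+1) (by omega) hj
      rw [show t₀ + ((k+1:ℕ):ℤ) = t₀ + 1 + k by push_cast; ring] at h
      exact h
    constructor
    · rw [show t₀ + 1 + ((k+1:ℕ):ℤ) = (t₀ + 1 + k) + 1 by push_cast; ring, D.P1_succ, hs, hv1]
      push_cast; ring
    · rw [show t₀ + 1 + ((k+1:ℕ):ℤ) = (t₀ + 1 + k) + 1 by push_cast; ring, D.P2_succ, hs, hv2]
      norm_num

lemma cap_valR :
    (D.P (t₀ + w + 2)).1 = (D.P t₀).1 + w * σ ∧ (D.P (t₀ + w + 2)).2 = (D.P t₀).2 := by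
  obtain ⟨hv1, hv2⟩ := cap_val hcap w le_rfl
  obtain ⟨hw, hσ, h1, hrun, h2⟩ := hcap
  have h2' : D.s (t₀ + 1 + w) = (0,-1) := by
    rw [show t₀ + 1 + (w:ℤ) = t₀ + w + 1 by ring]; exact h2
  have e : t₀ + (w:ℤ) + 2 = (t₀ + 1 + w) + 1 := by ring
  constructor
  · rw [e, D.P1_succ, h2', hv1]; norm_num
  · rw [e, D.P2_succ, h2', hv2]; ring

lemma cap_w_lt_d : (w:ℤ) < D.d := by
  by_contra hcon
  push_neg at hcon
  have hd0 := D.hd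
  set e := D.d.toNat with he
  have he1 : (e:ℤ) = D.d := Int.toNat_of_nonneg (by omega)
  have he2 : 1 ≤ e := by omega
  have he3 : e ≤ w := by omega
  obtain ⟨ha1, ha2⟩ := cap_val hcap e he3
  obtain ⟨hb1, hb2⟩ := cap_val hcap 0 (by omega)
  have hrow : (D.P (t₀ + 1 + e)).2 = (D.P (t₀ + 1 + (0:ℕ))).2 := by rw [ha2, hb2]
  have hcol : D.d ∣ ((D.P (t₀ + 1 + e)).1 - (D.P (t₀ + 1 + (0:ℕ))).1) := by
    rw [ha1, hb1, ← he1]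
    have : (D.P t₀).1 + (e:ℤ) * σ - ((D.P t₀).1 + ((0:ℕ):ℤ) * σ) = (e:ℤ) * σ := by push_cast; ring
    rw [this]
    exact Dvd.dvd.mul_right dvd_rfl σ
  have hdvd := D.P_simple _ _ hrow hcol
  have e2 : (t₀ + 1 + (e:ℤ)) - (t₀ + 1 + ((0:ℕ):ℤ)) = (e:ℤ) := by push_cast; ring
  rw [e2] at hdvd
  obtain ⟨q, hq⟩ := hdvd
  obtain ⟨hw, hσ, h1, hrun, h2⟩ := hcap
  have hs : D.s (t₀ + e) = D.s t₀ := by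
    rw [show t₀ + (e:ℤ) = t₀ + q * D.L by rw [hq]; ring, D.s_periodZ]
  have hs2 := hrun e he2 he3
  rw [hs2, h1] at hs
  have := congrArg Prod.snd hs
  norm_num at this

lemma cap_wL : w + 2 < D.L := by
  obtain ⟨hw, hσ, h1, hrun, h2⟩ := hcap
  have hwL : w + 2 ≤ D.L := by
    by_contra hcon
    push_neg at hcon
    rcases Nat.lt_or_ge D.L (w+1) with h | h
    · -- L ≤ w : run step contradiction
      have hL1 : 1 ≤ D.L := D.hL
      have hs : D.s (t₀ + D.L) = D.s t₀ := by
        rw [show t₀ + (D.L:ℤ) = t₀ + 1 * D.L by ring, D.s_periodZ]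
      have hs2 := hrun D.L hL1 (by omega)
      rw [hs2, h1] at hs
      have := congrArg Prod.snd hs
      norm_num at this
    · -- L = w + 1
      have hL1 : D.L = w + 1 := by omega
      have hs : D.s (t₀ + w + 1) = D.s t₀ := by
        rw [show t₀ + (w:ℤ) + 1 = t₀ + 1 * D.L by rw [hL1]; push_cast; ring, D.s_periodZ]
      rw [h2, h1] at hs
      have := congrArg Prod.snd hs
      norm_num at this
  rcases Nat.lt_or_ge (w+2) D.L with h | h
  · exact h
  · exfalso
    have hL2 : D.L = w + 2 := by omega
    have hP := D.P_periodZ t₀ 1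
    have hPR := (cap_valR ⟨hw, hσ, h1, hrun, h2⟩).1
    have e : t₀ + 1 * (D.L:ℤ) = t₀ + w + 2 := by rw [hL2]; push_cast; ring
    rw [e] at hP
    have h1' : (D.P (t₀ + w + 2)).1 = (D.P t₀).1 + 1 * D.c := by rw [hP]
    have hcw : D.c = w * σ := by omega
    have habs : |(w:ℤ) * σ| = w := by
      rcases hσ with rfl|rfl
      · simp
      · simp
    have hc := D.hc
    rw [hcw, habs] at hc
    have hwd := cap_w_lt_d ⟨hw, hσ, h1, hrun, h2⟩
    have hd := D.hd
    omega

end CapFacts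

lemma P_row (t : ℤ) : ∃ i, i < D.L ∧ (D.P t).2 = (D.B i).2 := by
  obtain ⟨q, i, hi, rfl⟩ := D.P_decomp t
  rw [D.P_eq q i hi]
  exact ⟨i, hi, rfl⟩

lemma capExists (hL3 : 3 ≤ D.L) {ν : ℤ} (hν : (D.s ν).2 ≠ 0) :
    ∃ t₀ w σ, D.Cap t₀ w σ := by
  classical
  have hne : (Finset.range D.L).Nonempty := ⟨0, by simp; omega⟩
  obtain ⟨istar, histar, hmax⟩ := (Finset.range D.L).exists_max_image (fun j => (D.B j).2) hne
  simp only [Finset.mem_range] at histar hmax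
  have rowBound : ∀ t : ℤ, (D.P t).2 ≤ (D.B istar).2 := by
    intro t
    obtain ⟨i, hi, he⟩ := D.P_row t
    rw [he]
    exact hmax i (by simp [hi])
  obtain ⟨m₁, m₂, hm1, hm2, hhoriz, hv1, hv2⟩ := D.runAround hν (istar : ℤ)
  have hrowrun : ∀ x, m₁ ≤ x → x ≤ m₂ → (D.P x).2 = (D.P m₁).2 := D.run_row hhoriz
  have hPtop : (D.P m₁).2 = (D.B istar).2 := by
    rw [← hrowrun istar hm1 hm2, D.P_ofNat istar (le_of_lt histar)]
  have hs1 : D.s (m₁ - 1) = (0, 1) := by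
    rcases vert_form (D.P_step (m₁-1)) hv1 with h | h
    · exact h
    · exfalso
      have := D.P2_succ (m₁ - 1)
      rw [show m₁ - 1 + 1 = m₁ by ring, h] at this
      have hb := rowBound (m₁ - 1)
      simp only at this
      omega
  have hs2 : D.s m₂ = (0, -1) := by
    rcases vert_form (D.P_step m₂) hv2 with h | h
    · exfalso
      have := D.P2_succ m₂
      rw [h] at this
      have hb := rowBound (m₂ + 1)
      have hr := hrowrun m₂ (by omega) le_rfl
      simp only at this
      omega
    · exact h
  have hm12 : m₁ < m₂ := by
    rcases lt_or_ge m₁ m₂ with h | h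
    · exact h
    · exfalso
      have he : m₁ = m₂ := by omega
      have hcon : D.s ((m₁ - 1) + 1) = -(D.s (m₁ - 1)) := by
        rw [hs1, show m₁ - 1 + 1 = m₁ by ring, he, hs2, Prod.neg_mk]
        norm_num
      exact D.noBacktrack hL3 (m₁ - 1) hcon
  have hdir := D.run_dir hL3 hhoriz
  have hsm1 : (D.s m₁).2 = 0 := hhoriz m₁ le_rfl hm12
  obtain ⟨σ, hσpm, hσ⟩ : ∃ σ, (σ = 1 ∨ σ = -1) ∧ D.s m₁ = (σ, 0) := by
    rcases horiz_form (D.P_step m₁) hsm1 with h | h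
    · exact ⟨1, Or.inl rfl, h⟩
    · exact ⟨-1, Or.inr rfl, h⟩
  refine ⟨m₁ - 1, (m₂ - m₁).toNat, σ, ?_, hσpm, ?_, ?_, ?_⟩
  · omega
  · exact hs1
  · intro j hj1 hjw
    have e : m₁ - 1 + (j:ℤ) = m₁ + ((j:ℤ) - 1) := by ring
    rw [e]
    have h1 : m₁ ≤ m₁ + ((j:ℤ) - 1) := by omega
    have h2 : m₁ + ((j:ℤ) - 1) < m₂ := by omega
    rw [hdir _ h1 h2, hσ]
  · have e : m₁ - 1 + ((m₂ - m₁).toNat:ℤ) + 1 = m₂ := by omega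
    rw [e]
    exact hs2

lemma minCapExists (hL3 : 3 ≤ D.L) {ν : ℤ} (hν : (D.s ν).2 ≠ 0) :
    ∃ t₀ w σ, D.Cap t₀ w σ ∧ ∀ t₀' w' σ', D.Cap t₀' w' σ' → (D.P t₀).2 ≤ (D.P t₀').2 := by
  classical
  obtain ⟨t₀, w, σ, hcap⟩ := D.capExists hL3 hν
  have hne : (Finset.range D.L).Nonempty := ⟨0, by simp; omega⟩
  obtain ⟨imin, himin, hminb⟩ := (Finset.range D.L).exists_min_image (fun j => (D.B j).2) hne
  simp only [Finset.mem_range] at himin hminb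
  have rowBound : ∀ t : ℤ, (D.B imin).2 ≤ (D.P t).2 := by
    intro t
    obtain ⟨i, hi, he⟩ := D.P_row t
    rw [he]
    exact hminb i (by simp [hi])
  have Hbdd : ∃ b : ℤ, ∀ z : ℤ, (∃ t₀' w' σ', D.Cap t₀' w' σ' ∧ (D.P t₀').2 = z) → b ≤ z := by
    refine ⟨(D.B imin).2, ?_⟩
    rintro z ⟨t₀', w', σ', hcap', rfl⟩
    exact rowBound t₀'
  have Hinh : ∃ z : ℤ, (∃ t₀' w' σ', D.Cap t₀' w' σ' ∧ (D.P t₀').2 = z) :=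
    ⟨(D.P t₀).2, t₀, w, σ, hcap, rfl⟩
  obtain ⟨lb, ⟨ta, wa, σa, hcapa, hrowa⟩, hle⟩ := Int.exists_least_of_bdd Hbdd Hinh
  refine ⟨ta, wa, σa, hcapa, ?_⟩
  intro t₀' w' σ' hcap'
  rw [hrowa]
  exact hle _ ⟨t₀', w', σ', hcap', rfl⟩

lemma descent1 (hL3 : 3 ≤ D.L)
    (hnoU : ∀ t : ℤ, D.s (t+2) ≠ -(D.s t))
    {t₀ : ℤ} {w : ℕ} (hcap : D.Cap t₀ w 1)
    (hmin : ∀ t₀' w' σ', D.Cap t₀' w' σ' → (D.P t₀).2 ≤ (D.P t₀').2)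
    (hblk : D.Blocked t₀ w 1) : False := by
  obtain ⟨m, j₀, hj1, hjw, hrow, hcol⟩ := hblk
  have hcol' : D.d ∣ ((D.P m).1 - ((D.P t₀).1 + (j₀:ℤ))) := by
    have e : (D.P m).1 - ((D.P t₀).1 + (j₀:ℤ) * 1) = (D.P m).1 - ((D.P t₀).1 + (j₀:ℤ)) := by ring
    rw [e] at hcol; exact hcol
  clear hcol
  have hval : ∀ j : ℕ, j ≤ w → (D.P (t₀ + 1 + j)).1 = (D.P t₀).1 + j ∧
      (D.P (t₀ + 1 + j)).2 = (D.P t₀).2 + 1 := by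
    intro j hj
    obtain ⟨h1, h2⟩ := cap_val hcap j hj
    exact ⟨by rw [h1]; ring, h2⟩
  have hvalR1 : (D.P (t₀ + w + 2)).1 = (D.P t₀).1 + w := by
    have := (cap_valR hcap).1; rw [this]; ring
  have hvalR2 : (D.P (t₀ + w + 2)).2 = (D.P t₀).2 := (cap_valR hcap).2
  have hwd : (w:ℤ) < D.d := cap_w_lt_d hcap
  obtain ⟨hw, _, hst₀, hrun, hend⟩ := hcap
  have cong : ∀ a b : ℤ, (D.P a).2 = (D.P b).2 → D.d ∣ ((D.P a).1 - (D.P b).1) →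
      ∀ r : ℤ, D.s (a + r) = D.s (b + r) := by
    intro a b h1 h2 r
    obtain ⟨q, hq⟩ := D.P_simple a b h1 h2
    have hc2 : (D.L:ℤ) * q = q * D.L := mul_comm _ _
    have e : a + r = (b + r) + q * D.L := by omega
    rw [e, D.s_periodZ]
  -- extract the run through the blocker m
  have hν : (D.s t₀).2 ≠ 0 := by rw [hst₀]; norm_num
  obtain ⟨m₁, m₂, hm1, hm2, hhoriz, hv1, hv2⟩ := D.runAround hν m
  have hrowrun := D.run_row hhoriz
  have hrowx : ∀ x, m₁ ≤ x → x ≤ m₂ → (D.P x).2 = (D.P t₀).2 := by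
    intro x h1 h2
    rw [hrowrun x h1 h2, ← hrowrun m hm1 hm2, hrow]
  -- hit lemmas
  have hitL : ∀ τ, m₁ ≤ τ → τ ≤ m₂ → D.d ∣ ((D.P τ).1 - (D.P t₀).1) → τ = m₂ := by
    intro τ h1 h2 hdvd
    by_contra hne
    have hτ : τ < m₂ := by omega
    have hh := hhoriz τ h1 hτ
    have h0 := cong τ t₀ (hrowx τ h1 h2) hdvd 0
    simp only [add_zero] at h0
    rw [h0, hst₀] at hh
    norm_num at hh
  have hitR : ∀ τ, m₁ ≤ τ → τ ≤ m₂ → D.d ∣ ((D.P τ).1 - ((D.P t₀).1 + w)) → τ = m₁ := by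
    intro τ h1 h2 hdvd
    by_contra hne
    have hτ : m₁ < τ := by omega
    have hh := hhoriz (τ-1) (by omega) (by omega)
    have hdvd' : D.d ∣ ((D.P τ).1 - (D.P (t₀ + w + 2)).1) := by rw [hvalR1]; exact hdvd
    have h0 := cong τ (t₀ + w + 2) (by rw [hrowx τ h1 h2, hvalR2]) hdvd' (-1)
    rw [show τ + -1 = τ - 1 by ring, show t₀ + (w:ℤ) + 2 + -1 = t₀ + w + 1 by ring] at h0
    rw [h0, hend] at hh
    norm_num at hh
  -- the run is not a single vertex
  have hm12 : m₁ < m₂ := by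
    rcases lt_or_ge m₁ m₂ with h | h
    · exact h
    exfalso
    have he1 : m₁ = m := by omega
    have he2 : m₂ = m := by omega
    rw [he1] at hv1
    rw [he2] at hv2
    rcases vert_form (D.P_step (m-1)) hv1 with hA | hA
    · -- s(m-1) = (0,1)
      rcases vert_form (D.P_step m) hv2 with hB | hB
      · -- s m = (0,1) : P(m+1) matches a run-interior vertex
        have hrow1 : (D.P (m+1)).2 = (D.P (t₀ + 1 + j₀)).2 := by
          rw [D.P2_succ, hB, (hval j₀ (by omega)).2, hrow]
          try norm_num
        have hcol1 : D.d ∣ ((D.P (m+1)).1 - (D.P (t₀ + 1 + j₀)).1) := by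
          rw [D.P1_succ, hB, (hval j₀ (by omega)).1]
          have e : (D.P m).1 + ((0:ℤ),(1:ℤ)).1 - ((D.P t₀).1 + j₀)
              = (D.P m).1 - ((D.P t₀).1 + (j₀:ℤ)) := by norm_num
          rw [e]; exact hcol'
        have h0 := cong (m+1) (t₀ + 1 + j₀) hrow1 hcol1 (-1)
        rw [show m + 1 + -1 = m by ring, show t₀ + 1 + (j₀:ℤ) + -1 = t₀ + j₀ by ring] at h0
        rw [hrun j₀ hj1 (by omega)] at h0
        rw [h0] at hB
        exact absurd (congrArg Prod.snd hB) (by norm_num)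
      · -- s m = (0,-1) : backtrack
        refine D.noBacktrack hL3 (m - 1) ?_
        rw [show m - 1 + 1 = m by ring, hA, hB, Prod.neg_mk]
        norm_num
    · -- s(m-1) = (0,-1) : P(m-1) matches a run-interior vertex
      have hrow1 : (D.P (m-1)).2 = (D.P (t₀ + 1 + j₀)).2 := by
        have h2s := D.P2_succ (m-1)
        rw [show m - 1 + 1 = m by ring, hA] at h2s
        rw [(hval j₀ (by omega)).2, ← hrow]
        simp only at h2s
        omega
      have hcol1 : D.d ∣ ((D.P (m-1)).1 - (D.P (t₀ + 1 + j₀)).1) := by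
        have h1s := D.P1_succ (m-1)
        rw [show m - 1 + 1 = m by ring, hA] at h1s
        rw [(hval j₀ (by omega)).1]
        have e : (D.P (m-1)).1 - ((D.P t₀).1 + (j₀:ℤ)) = (D.P m).1 - ((D.P t₀).1 + (j₀:ℤ)) := by
          simp only at h1s
          omega
        rw [e]; exact hcol'
      have h0 := cong (m-1) (t₀ + 1 + j₀) hrow1 hcol1 0
      simp only [add_zero] at h0
      have hr : D.s (t₀ + 1 + j₀) = (1, 0) := by
        have := hrun (j₀+1) (by omega) (by omega)
        rw [show t₀ + ((j₀+1:ℕ):ℤ) = t₀ + 1 + j₀ by push_cast; ring] at this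
        exact this
      rw [hr] at h0
      rw [h0] at hA
      exact absurd (congrArg Prod.snd hA) (by norm_num)
  -- direction of the run
  have hdir := D.run_dir hL3 hhoriz
  have haff := D.run_affine hdir
  obtain ⟨δ, hδpm, hδ⟩ : ∃ δ, (δ = 1 ∨ δ = -1) ∧ D.s m₁ = (δ, 0) := by
    rcases horiz_form (D.P_step m₁) (hhoriz m₁ le_rfl hm12) with h | h
    · exact ⟨1, Or.inl rfl, h⟩
    · exact ⟨-1, Or.inr rfl, h⟩
  have haff' : ∀ x, m₁ ≤ x → x ≤ m₂ → (D.P x).1 = (D.P m₁).1 + (x - m₁) * δ := by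
    intro x h1 h2
    have := haff x h1 h2
    rw [hδ] at this
    exact this
  by_cases HR : D.d ∣ ((D.P m₁).1 - ((D.P t₀).1 + w))
  · -- the left end of the run sits over the right flank bottom
    have hdvd' : D.d ∣ ((D.P m₁).1 - (D.P (t₀ + w + 2)).1) := by rw [hvalR1]; exact HR
    have hcong := cong m₁ (t₀ + w + 2) (by rw [hrowx m₁ le_rfl (by omega), hvalR2]) hdvd'
    have hs0 := hcong 0
    simp only [add_zero] at hs0
    have hδ1 : δ = 1 := by
      rcases hδpm with h | h
      · exact h
      exfalso
      refine hnoU (t₀ + w) ?_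
      have hrw : D.s (t₀ + w) = (1, 0) := hrun w hw le_rfl
      rw [show t₀ + (w:ℤ) + 2 = t₀ + w + 2 by ring, ← hs0, hδ, h, hrw, Prod.neg_mk]
      norm_num
    subst hδ1
    have key : D.d ∣ ((m - m₁) + (w:ℤ) - j₀) := by
      have e : (m - m₁) + (w:ℤ) - j₀ =
          ((D.P m).1 - ((D.P t₀).1 + (j₀:ℤ))) - ((D.P m₁).1 - ((D.P t₀).1 + w)) := by
        rw [haff' m hm1 hm2]
        ring
      rw [e]
      exact dvd_sub hcol' HR
    have hpos : 0 < (m - m₁) + (w:ℤ) - j₀ := by omega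
    have hge := Int.le_of_dvd hpos key
    have hmm : m - m₁ ≥ D.d - w + 1 := by omega
    set τ := m₁ + (D.d - w) with hτdef
    have hτ1 : m₁ ≤ τ := by omega
    have hτ2 : τ ≤ m₂ := by omega
    have hhit : D.d ∣ ((D.P τ).1 - (D.P t₀).1) := by
      have e : (D.P τ).1 - (D.P t₀).1 = ((D.P m₁).1 - ((D.P t₀).1 + w)) + D.d := by
        rw [haff' τ hτ1 hτ2]
        ring
      rw [e]
      exact dvd_add HR dvd_rfl
    have := hitL τ hτ1 hτ2 hhit
    omega
  by_cases HL : D.d ∣ ((D.P m₂).1 - (D.P t₀).1)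
  · -- the right end of the run sits over the left flank bottom
    have hcong := cong m₂ t₀ (hrowx m₂ (by omega) le_rfl) HL
    have hs0 := hcong (-1)
    rw [show m₂ + -1 = m₂ - 1 by ring] at hs0
    have hsm2' : D.s (m₂ - 1) = (1*δ, 0) := by
      rw [hdir (m₂ - 1) (by omega) (by omega), hδ]; norm_num
    have hδ1 : δ = 1 := by
      rcases hδpm with h | h
      · exact h
      exfalso
      refine hnoU (t₀ + -1) ?_
      have hr1 : D.s (t₀ + 1) = (1, 0) := by
        have := hrun 1 le_rfl hw
        rw [show t₀ + ((1:ℕ):ℤ) = t₀ + 1 by push_cast; ring] at this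
        exact this
      rw [show t₀ + -1 + 2 = t₀ + 1 by ring, hr1, ← hs0, hsm2', h, Prod.neg_mk]
      norm_num
    subst hδ1
    have key : D.d ∣ ((m₂ - m) + (j₀:ℤ)) := by
      have e : (m₂ - m) + (j₀:ℤ) =
          ((D.P m₂).1 - (D.P t₀).1) - ((D.P m).1 - ((D.P t₀).1 + (j₀:ℤ))) := by
        rw [haff' m hm1 hm2, haff' m₂ (by omega) le_rfl]
        ring
      rw [e]
      exact dvd_sub HL hcol'
    have hpos : 0 < (m₂ - m) + (j₀:ℤ) := by omega
    have hge := Int.le_of_dvd hpos key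
    have hmm : m₂ - m ≥ D.d - j₀ := by omega
    set τ := m₂ - (D.d - w) with hτdef
    have hτ1 : m₁ ≤ τ := by omega
    have hτ2 : τ ≤ m₂ := by omega
    have hhit : D.d ∣ ((D.P τ).1 - ((D.P t₀).1 + w)) := by
      have e : (D.P τ).1 - ((D.P t₀).1 + (w:ℤ)) = ((D.P m₂).1 - (D.P t₀).1) - D.d := by
        rw [haff' τ hτ1 hτ2, haff' m₂ (by omega) le_rfl]
        ring
      rw [e]
      exact dvd_sub HL dvd_rfl
    have := hitR τ hτ1 hτ2 hhit
    omega
  · -- no hits : the run is a lower cap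
    have noHitL : ∀ τ, m₁ ≤ τ → τ ≤ m₂ → ¬ D.d ∣ ((D.P τ).1 - (D.P t₀).1) := by
      intro τ h1 h2 h
      have := hitL τ h1 h2 h
      subst this
      exact HL h
    have noHitR : ∀ τ, m₁ ≤ τ → τ ≤ m₂ → ¬ D.d ∣ ((D.P τ).1 - ((D.P t₀).1 + w)) := by
      intro τ h1 h2 h
      have := hitR τ h1 h2 h
      subst this
      exact HR h
    have stepcol : ∀ x, m₁ ≤ x → x < m₂ → (D.P (x+1)).1 = (D.P x).1 + δ := by
      intro x h1 h2
      rw [D.P1_succ, hdir x h1 h2, hδ]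
    -- propagate the interior offset up and down from m
    have propU : ∀ k : ℕ, m + k ≤ m₂ → ∃ e : ℤ, 1 ≤ e ∧ e ≤ (w:ℤ) - 1 ∧
        D.d ∣ ((D.P (m + k)).1 - ((D.P t₀).1 + e)) := by
      intro k
      induction k with
      | zero =>
        intro _
        exact ⟨j₀, by omega, by omega, by simpa using hcol'⟩
      | succ n ih =>
        intro hk
        obtain ⟨e, he1, he2, hdvd⟩ := ih (by push_cast at hk ⊢; omega)
        have hx1 : m₁ ≤ m + n := by omega
        have hx2 : m + n < m₂ := by push_cast at hk; omega
        have hcolstep := stepcol (m + n) hx1 hx2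
        have hdvd' : D.d ∣ ((D.P (m + (n+1:ℕ))).1 - ((D.P t₀).1 + (e + δ))) := by
          have e2 : (D.P (m + (n+1:ℕ))).1 - ((D.P t₀).1 + (e + δ))
              = (D.P (m + n)).1 - ((D.P t₀).1 + e) := by
            rw [show m + ((n+1:ℕ):ℤ) = (m + n) + 1 by push_cast; ring, hcolstep]
            ring
          rw [e2]; exact hdvd
        have hrange : 0 ≤ e + δ ∧ e + δ ≤ w := by rcases hδpm with rfl|rfl <;> omega
        have hne0 : e + δ ≠ 0 := by
          intro h0
          refine noHitL (m + (n+1:ℕ)) (by push_cast; omega) (by push_cast; omega) ?_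
          have e3 : (D.P (m + (n+1:ℕ))).1 - (D.P t₀).1
              = (D.P (m + (n+1:ℕ))).1 - ((D.P t₀).1 + (e + δ)) := by rw [h0]; ring
          rw [e3]; exact hdvd'
        have hnew : e + δ ≠ w := by
          intro h0
          refine noHitR (m + (n+1:ℕ)) (by push_cast; omega) (by push_cast; omega) ?_
          rw [← h0]
          exact hdvd'
        exact ⟨e + δ, by omega, by omega, hdvd'⟩
    have propD : ∀ k : ℕ, m₁ ≤ m - k → ∃ e : ℤ, 1 ≤ e ∧ e ≤ (w:ℤ) - 1 ∧
        D.d ∣ ((D.P (m - k)).1 - ((D.P t₀).1 + e)) := by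
      intro k
      induction k with
      | zero =>
        intro _
        exact ⟨j₀, by omega, by omega, by simpa using hcol'⟩
      | succ n ih =>
        intro hk
        obtain ⟨e, he1, he2, hdvd⟩ := ih (by push_cast at hk ⊢; omega)
        have hx1 : m₁ ≤ m - (n+1:ℕ) := by push_cast at hk ⊢; omega
        have hx2 : m - (n+1:ℕ) < m₂ := by push_cast; omega
        have hcolstep := stepcol (m - (n+1:ℕ)) hx1 hx2
        have hdvd' : D.d ∣ ((D.P (m - (n+1:ℕ))).1 - ((D.P t₀).1 + (e - δ))) := by
          have e2 : (D.P (m - (n+1:ℕ))).1 - ((D.P t₀).1 + (e - δ))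
              = (D.P (m - n)).1 - ((D.P t₀).1 + e) := by
            rw [show m - ((n:ℕ):ℤ) = (m - ((n+1:ℕ):ℤ)) + 1 by push_cast; ring, hcolstep]
            ring
          rw [e2]; exact hdvd
        have hrange : 0 ≤ e - δ ∧ e - δ ≤ w := by rcases hδpm with rfl|rfl <;> omega
        have hne0 : e - δ ≠ 0 := by
          intro h0
          refine noHitL (m - (n+1:ℕ)) hx1 (by omega) ?_
          have e3 : (D.P (m - (n+1:ℕ))).1 - (D.P t₀).1
              = (D.P (m - (n+1:ℕ))).1 - ((D.P t₀).1 + (e - δ)) := by rw [h0]; ring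
          rw [e3]; exact hdvd'
        have hnew : e - δ ≠ w := by
          intro h0
          refine noHitR (m - (n+1:ℕ)) hx1 (by omega) ?_
          rw [← h0]
          exact hdvd'
        exact ⟨e - δ, by omega, by omega, hdvd'⟩
    obtain ⟨e₂, he21, he22, hdvd2⟩ := propU (m₂ - m).toNat (by omega)
    obtain ⟨e₁, he11, he12, hdvd1⟩ := propD (m - m₁).toNat (by omega)
    rw [show m + ((m₂ - m).toNat:ℤ) = m₂ by omega] at hdvd2
    rw [show m - ((m - m₁).toNat:ℤ) = m₁ by omega] at hdvd1
    -- identify the flanks of the run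
    have hsm2 : D.s m₂ = (0, -1) := by
      rcases vert_form (D.P_step m₂) hv2 with hB | hB
      · exfalso
        set j := e₂.toNat with hj
        have hjcast : (j:ℤ) = e₂ := Int.toNat_of_nonneg (by omega)
        have hrow1 : (D.P (m₂+1)).2 = (D.P (t₀ + 1 + j)).2 := by
          rw [D.P2_succ, hB, (hval j (by omega)).2, hrowx m₂ (by omega) le_rfl]
          try norm_num
        have hcol1 : D.d ∣ ((D.P (m₂+1)).1 - (D.P (t₀ + 1 + j)).1) := by
          rw [D.P1_succ, hB, (hval j (by omega)).1, hjcast]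
          have e : (D.P m₂).1 + ((0:ℤ),(1:ℤ)).1 - ((D.P t₀).1 + e₂)
              = (D.P m₂).1 - ((D.P t₀).1 + e₂) := by norm_num
          rw [e]; exact hdvd2
        have h0 := cong (m₂+1) (t₀ + 1 + j) hrow1 hcol1 (-1)
        rw [show m₂ + 1 + -1 = m₂ by ring, show t₀ + 1 + (j:ℤ) + -1 = t₀ + j by ring] at h0
        rw [hrun j (by omega) (by omega)] at h0
        rw [h0] at hB
        exact absurd (congrArg Prod.snd hB) (by norm_num)
      · exact hB
    have hsm1 : D.s (m₁ - 1) = (0, 1) := by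
      rcases vert_form (D.P_step (m₁-1)) hv1 with hB | hB
      · exact hB
      · exfalso
        set j := e₁.toNat with hj
        have hjcast : (j:ℤ) = e₁ := Int.toNat_of_nonneg (by omega)
        have hrow1 : (D.P (m₁-1)).2 = (D.P (t₀ + 1 + j)).2 := by
          have h2s := D.P2_succ (m₁-1)
          rw [show m₁ - 1 + 1 = m₁ by ring, hB] at h2s
          rw [(hval j (by omega)).2, ← hrowx m₁ le_rfl (by omega)]
          simp only at h2s
          omega
        have hcol1 : D.d ∣ ((D.P (m₁-1)).1 - (D.P (t₀ + 1 + j)).1) := by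
          have h1s := D.P1_succ (m₁-1)
          rw [show m₁ - 1 + 1 = m₁ by ring, hB] at h1s
          rw [(hval j (by omega)).1, hjcast]
          have e : (D.P (m₁-1)).1 - ((D.P t₀).1 + e₁) = (D.P m₁).1 - ((D.P t₀).1 + e₁) := by
            simp only at h1s
            omega
          rw [e]; exact hdvd1
        have h0 := cong (m₁-1) (t₀ + 1 + j) hrow1 hcol1 0
        simp only [add_zero] at h0
        have hr : D.s (t₀ + 1 + j) = (1, 0) := by
          have := hrun (j+1) (by omega) (by omega)
          rw [show t₀ + ((j+1:ℕ):ℤ) = t₀ + 1 + j by push_cast; ring] at this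
          exact this
        rw [hr] at h0
        rw [h0] at hB
        exact absurd (congrArg Prod.snd hB) (by norm_num)
    -- the run is a cap one row lower : contradiction with minimality
    have hcapV : D.Cap (m₁ - 1) (m₂ - m₁).toNat δ := by
      refine ⟨by omega, hδpm, ?_, ?_, ?_⟩
      · rw [show m₁ - 1 = m₁ - 1 by rfl]; exact hsm1
      · intro j hj1 hjw2
        have e : m₁ - 1 + (j:ℤ) = m₁ + ((j:ℤ) - 1) := by ring
        rw [e, hdir _ (by omega) (by omega), hδ]
      · have e : m₁ - 1 + (((m₂ - m₁).toNat:ℕ):ℤ) + 1 = m₂ := by omega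
        rw [e]
        exact hsm2
    have := hmin _ _ _ hcapV
    have h2s := D.P2_succ (m₁-1)
    rw [show m₁ - 1 + 1 = m₁ by ring, hsm1] at h2s
    have hm₁row : (D.P m₁).2 = (D.P t₀).2 := hrowx m₁ le_rfl (by omega)
    simp only at h2s
    omega

lemma cap_refl {t₀ : ℤ} {w : ℕ} {σ : ℤ} (h : D.Cap t₀ w σ) : D.refl.Cap t₀ w (-σ) := by
  obtain ⟨hw, hσ, h1, hrun, h2⟩ := h
  refine ⟨hw, by rcases hσ with rfl|rfl <;> norm_num, ?_, ?_, ?_⟩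
  · rw [D.refl_s, h1]; norm_num
  · intro j hj1 hj2
    rw [D.refl_s, hrun j hj1 hj2]
  · rw [D.refl_s, h2]; norm_num

lemma cap_refl_rev {t₀ : ℤ} {w : ℕ} {σ : ℤ} (h : D.refl.Cap t₀ w σ) : D.Cap t₀ w (-σ) := by
  obtain ⟨hw, hσ, h1, hrun, h2⟩ := h
  rw [D.refl_s] at h1 h2
  refine ⟨hw, by rcases hσ with rfl|rfl <;> norm_num, ?_, ?_, ?_⟩
  · have c1 : -(D.s t₀).1 = 0 := congrArg Prod.fst h1
    have c2 : (D.s t₀).2 = 1 := congrArg Prod.snd h1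
    rw [Prod.ext_iff]
    exact ⟨by simp only; omega, by simpa using c2⟩
  · intro j hj1 hj2
    have h3 := hrun j hj1 hj2
    rw [D.refl_s] at h3
    have c1 : -(D.s (t₀ + j)).1 = σ := congrArg Prod.fst h3
    have c2 : (D.s (t₀ + j)).2 = 0 := congrArg Prod.snd h3
    rw [Prod.ext_iff]
    exact ⟨by simp only; omega, by simpa using c2⟩
  · have c1 : -(D.s (t₀ + w + 1)).1 = 0 := congrArg Prod.fst h2
    have c2 : (D.s (t₀ + w + 1)).2 = -1 := congrArg Prod.snd h2
    rw [Prod.ext_iff]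
    exact ⟨by simp only; omega, by simpa using c2⟩

lemma descent (hL3 : 3 ≤ D.L)
    (hnoU : ∀ t : ℤ, D.s (t+2) ≠ -(D.s t))
    {t₀ : ℤ} {w : ℕ} {σ : ℤ} (hcap : D.Cap t₀ w σ)
    (hmin : ∀ t₀' w' σ', D.Cap t₀' w' σ' → (D.P t₀).2 ≤ (D.P t₀').2)
    (hblk : D.Blocked t₀ w σ) : False := by
  have hσ := hcap.2.1
  rcases hσ with rfl | rfl
  · exact D.descent1 hL3 hnoU hcap hmin hblk
  · -- reflect
    have hL3' : 3 ≤ D.refl.L := hL3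
    have hnoU' : ∀ t : ℤ, D.refl.s (t+2) ≠ -(D.refl.s t) := by
      intro t hcon
      rw [D.refl_s, D.refl_s] at hcon
      have c1 : -(D.s (t+2)).1 = -(-(D.s t).1) := congrArg Prod.fst hcon
      have c2 : (D.s (t+2)).2 = -(D.s t).2 := congrArg Prod.snd hcon
      refine hnoU t ?_
      rw [Prod.ext_iff]
      exact ⟨by simp only [Prod.fst_neg]; omega, by simp only [Prod.snd_neg]; omega⟩
    have hcap' : D.refl.Cap t₀ w 1 := by
      have := D.cap_refl hcap
      norm_num at this
      exact this
    have hmin' : ∀ t₀' w' σ', D.refl.Cap t₀' w' σ' → (D.refl.P t₀).2 ≤ (D.refl.P t₀').2 := by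
      intro t₀' w' σ' hc
      rw [D.refl_P, D.refl_P]
      exact hmin t₀' w' (-σ') (D.cap_refl_rev hc)
    have hblk' : D.refl.Blocked t₀ w 1 := by
      obtain ⟨m, j, hj1, hjw, hrow, hcol⟩ := hblk
      refine ⟨m, j, hj1, hjw, ?_, ?_⟩
      · rw [D.refl_P, D.refl_P]; exact hrow
      · rw [D.refl_P, D.refl_P]
        have e : (-(D.P m).1 : ℤ) - (-(D.P t₀).1 + (j:ℤ) * 1)
            = -((D.P m).1 - ((D.P t₀).1 + (j:ℤ) * (-1))) := by ring
        simp only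
        rw [e]
        exact dvd_neg.mpr hcol
    exact D.refl.descent1 hL3' hnoU' hcap' hmin' hblk'

lemma surgery1_exists (hL3 : 3 ≤ D.L) (hu : D.B 3 - D.B 2 = -(D.B 1 - D.B 0)) :
    ∃ D' : Data, D'.L + 2 = D.L := by
  have h3 : D.B 3 - D.B 0 = D.B 2 - D.B 1 := by
    rw [show D.B 3 - D.B 0 = (D.B 3 - D.B 2) + (D.B 2 - D.B 1) + (D.B 1 - D.B 0) by abel, hu]
    abel
  refine ⟨⟨D.L - 2, D.d, D.c, fun i => if i = 0 then (0,0) else D.B (i+2),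
    by omega, D.hd, D.hdc, D.hc, by simp, ?_, ?_, ?_⟩, show D.L - 2 + 2 = D.L by omega⟩
  · show (if D.L - 2 = 0 then ((0,0):V) else D.B (D.L - 2 + 2)) = (D.c, 0)
    have h1 : D.L - 2 ≠ 0 := by omega
    simp only [h1, if_false]
    rw [show D.L - 2 + 2 = D.L by omega, D.hE]
  · intro i hi
    rcases Nat.eq_zero_or_pos i with rfl | hipos
    · simp only [Nat.zero_add, if_neg (by omega : (1:ℕ) ≠ 0), if_pos rfl]
      have h4 := D.hstep 1 (by omega)
      rw [← h3] at h4
      rw [D.h0] at h4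
      exact h4
    · simp only [if_neg (by omega : i + 1 ≠ 0), if_neg (by omega : i ≠ 0)]
      exact D.hstep (i+2) (by omega)
  · intro i j hi hj hrow hcol
    have key : ∀ k : ℕ, (if k = 0 then ((0,0):V) else D.B (k+2)) = D.B (if k = 0 then 0 else k + 2) := by
      intro k
      split
      · rw [D.h0]
      · rfl
    rw [key i, key j] at hrow hcol
    have hlt : ∀ k : ℕ, k < D.L - 2 → (if k = 0 then 0 else k + 2) < D.L := by
      intro k hk; split <;> omega
    have := D.hsimp _ _ (hlt i hi) (hlt j hj) hrow hcol
    split at this <;> split at this <;> omega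

lemma surgery2_exists (w : ℕ) (σ : ℤ) (hw : 1 ≤ w) (hσ : σ = 1 ∨ σ = -1)
    (hwL : w + 2 < D.L)
    (hrunv : ∀ j : ℕ, j ≤ w → D.B (j+1) = (σ * j, 1))
    (hflankR : D.B (w+2) = (σ * w, 0))
    (hunb : ∀ m, m < D.L → (D.B m).2 = 0 → ∀ j : ℕ, 1 ≤ j → j < w → ¬ D.d ∣ ((D.B m).1 - σ * j)) :
    ∃ D' : Data, D'.L + 2 = D.L := by
  refine ⟨⟨D.L - 2, D.d, D.c, fun i => if i ≤ w then (σ * i, 0) else D.B (i+2),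
    by omega, D.hd, D.hdc, D.hc, by norm_num, ?_, ?_, ?_⟩, show D.L - 2 + 2 = D.L by omega⟩
  · show (if D.L - 2 ≤ w then ((σ * (D.L - 2 : ℕ), 0):V) else D.B (D.L - 2 + 2)) = (D.c, 0)
    simp only [if_neg (by omega : ¬ (D.L - 2 ≤ w))]
    rw [show D.L - 2 + 2 = D.L by omega, D.hE]
  · intro i hi
    rcases Nat.lt_or_ge i w with hiw | hiw
    · simp only [if_pos (by omega : i + 1 ≤ w), if_pos (by omega : i ≤ w)]
      apply isStep_of_comp
      left
      constructor
      · simp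
      · simp only [Prod.fst_sub]
        rcases hσ with rfl | rfl <;> [left; right] <;> push_cast <;> ring
    · rcases Nat.eq_or_lt_of_le hiw with rfl | hiw2
      · -- i = w
        simp only [if_neg (by omega : ¬ (w + 1 ≤ w)), if_pos (le_refl w)]
        have h4 := D.hstep (w+2) (by omega)
        rw [hflankR] at h4
        rw [show w + 1 + 2 = w + 2 + 1 by omega]
        exact h4
      · simp only [if_neg (by omega : ¬ (i + 1 ≤ w)), if_neg (by omega : ¬ (i ≤ w))]
        exact D.hstep (i+2) (by omega)
  · intro i j hi hj hrow hcol
    -- handle by cases on which side of w the indices lie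
    rcases le_or_gt i w with hiw | hiw <;> rcases le_or_gt j w with hjw | hjw
    · -- both new : use the original run vertices
      simp only [if_pos hiw, if_pos hjw] at hrow hcol
      have hri := hrunv i hiw
      have hrj := hrunv j hjw
      have hrow2 : (D.B (i+1)).2 = (D.B (j+1)).2 := by rw [hri, hrj]
      have hcol2 : D.d ∣ ((D.B (i+1)).1 - (D.B (j+1)).1) := by
        rw [hri, hrj]
        simpa using hcol
      have := D.hsimp (i+1) (j+1) (by omega) (by omega) hrow2 hcol2
      omega
    · -- i new, j old
      exfalso
      simp only [if_pos hiw, if_neg (by omega : ¬ (j ≤ w))] at hrow hcol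
      have hrowX : (D.B (j+2)).2 = 0 := by simpa using hrow.symm
      have hcolX : D.d ∣ (σ * (i:ℤ) - (D.B (j+2)).1) := by simpa using hcol
      rcases Nat.eq_zero_or_pos i with rfl | hipos
      · -- i = 0 : compare with index 0
        have hrow2 : (D.B 0).2 = (D.B (j+2)).2 := by rw [D.h0, hrowX]
        have hcol2 : D.d ∣ ((D.B 0).1 - (D.B (j+2)).1) := by
          rw [D.h0]
          have e : (((0:ℤ),(0:ℤ)):V).1 - (D.B (j+2)).1 = σ * ((0:ℕ):ℤ) - (D.B (j+2)).1 := by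
            norm_num
          rw [e]; exact hcolX
        have := D.hsimp 0 (j+2) (by omega) (by omega) hrow2 hcol2
        omega
      · rcases Nat.eq_or_lt_of_le hiw with rfl | hiw2
        · -- i = w : compare with index w+2
          have hrow2 : (D.B (i+2)).2 = (D.B (j+2)).2 := by rw [hflankR, hrowX]
          have hcol2 : D.d ∣ ((D.B (i+2)).1 - (D.B (j+2)).1) := by
            rw [hflankR]
            have e : ((σ * (i:ℤ), (0:ℤ)):V).1 - (D.B (j+2)).1
                = σ * (i:ℤ) - (D.B (j+2)).1 := by norm_num
            rw [e]; exact hcolX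
          have := D.hsimp (i+2) (j+2) (by omega) (by omega) hrow2 hcol2
          omega
        · -- 1 ≤ i < w : blocked!
          refine hunb (j+2) (by omega) hrowX i hipos hiw2 ?_
          have e : (D.B (j+2)).1 - σ * (i:ℤ) = -(σ * (i:ℤ) - (D.B (j+2)).1) := by ring
          rw [e]
          exact dvd_neg.mpr hcolX
    · -- j new, i old : symmetric
      exfalso
      simp only [if_neg (by omega : ¬ (i ≤ w)), if_pos hjw] at hrow hcol
      have hrowX : (D.B (i+2)).2 = 0 := by simpa using hrow
      have hcolX : D.d ∣ ((D.B (i+2)).1 - σ * (j:ℤ)) := by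
        have e : (D.B (i+2)).1 - σ * (j:ℤ) = (D.B (i+2)).1 - ((σ * (j:ℤ), (0:ℤ)):V).1 := by
          norm_num
        rw [e]; exact hcol
      rcases Nat.eq_zero_or_pos j with rfl | hjpos
      · have hrow2 : (D.B (i+2)).2 = (D.B 0).2 := by rw [D.h0, hrowX]
        have hcol2 : D.d ∣ ((D.B (i+2)).1 - (D.B 0).1) := by
          rw [D.h0]
          have e : (D.B (i+2)).1 - (((0:ℤ),(0:ℤ)):V).1 = (D.B (i+2)).1 - σ * ((0:ℕ):ℤ) := by
            norm_num
          rw [e]; exact hcolX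
        have := D.hsimp (i+2) 0 (by omega) (by omega) hrow2 hcol2
        omega
      · rcases Nat.eq_or_lt_of_le hjw with rfl | hjw2
        · have hrow2 : (D.B (i+2)).2 = (D.B (j+2)).2 := by rw [hflankR, hrowX]
          have hcol2 : D.d ∣ ((D.B (i+2)).1 - (D.B (j+2)).1) := by
            rw [hflankR]
            have e : (D.B (i+2)).1 - ((σ * (j:ℤ), (0:ℤ)):V).1
                = (D.B (i+2)).1 - σ * (j:ℤ) := by norm_num
            rw [e]; exact hcolX
          have := D.hsimp (i+2) (j+2) (by omega) (by omega) hrow2 hcol2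
          omega
        · exact hunb (i+2) (by omega) hrowX j hjpos hjw2 hcolX
    · -- both old
      simp only [if_neg (by omega : ¬ (i ≤ w)), if_neg (by omega : ¬ (j ≤ w))] at hrow hcol
      have := D.hsimp (i+2) (j+2) (by omega) (by omega) hrow hcol
      omega

lemma hcOr : 2 * D.d ≤ D.c ∨ 2 * D.d ≤ -D.c := by
  have hx := D.hc
  rcases abs_cases D.c with ⟨h, _⟩ | ⟨h, _⟩
  · left; omega
  · right; omega

lemma s_ofNat (i : ℕ) (hi : i < D.L) : D.s i = D.B (i+1) - D.B i := by
  unfold s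
  rw [show ((i:ℤ)+1) = ((i+1:ℕ):ℤ) by push_cast; ring]
  rw [D.P_ofNat (i+1) (by omega), D.P_ofNat i (by omega)]

lemma smallL_contra (hL : D.L ≤ 2) : False := by
  have hd := D.hd
  have h1 : 1 ≤ D.L := D.hL
  rcases D.hcOr with hc' | hc'
  all_goals (
    rcases (by omega : D.L = 1 ∨ D.L = 2) with h | h
    · (have hs := D.hstep 0 (by omega)
       rw [show (0:ℕ)+1 = D.L by omega, D.hE, D.h0] at hs
       have hcases := hs.cases
       simp only [Prod.fst_sub, Prod.snd_sub] at hcases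
       norm_num at hcases
       omega)
    · (have c0 := (D.hstep 0 (by omega)).cases
       have c1 := (D.hstep 1 (by omega)).cases
       simp only [Prod.fst_sub, Prod.snd_sub, show (1:ℕ)+1 = 2 from rfl,
         show (0:ℕ)+1 = 1 from rfl] at c0 c1
       have e0 : (D.B 0).1 = 0 := by rw [D.h0]
       have e0' : (D.B 0).2 = 0 := by rw [D.h0]
       have e2 : (D.B 2).1 = D.c := by rw [show (2:ℕ) = D.L by omega, D.hE]
       have e2' : (D.B 2).2 = 0 := by rw [show (2:ℕ) = D.L by omega, D.hE]
       rcases c0 with ⟨h2, h3|h3⟩ | ⟨h2, h3|h3⟩ <;> rcases c1 with ⟨k2, k3|k3⟩ | ⟨k2, k3|k3⟩ <;>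
        first
          | omega
          | (have hd1 : D.d = 1 := by omega
             have := D.hsimp 0 1 (by omega) (by omega) (by omega) (by rw [hd1]; exact one_dvd _)
             omega)))

lemma allHoriz_contra (hL3 : 3 ≤ D.L)
    (Hall : ∀ i, i < D.L → (D.B (i+1) - D.B i).2 = 0) : False := by
  have hd := D.hd
  have rows : ∀ i, i ≤ D.L → (D.B i).2 = 0 := by
    intro i
    induction i with
    | zero => intro _; rw [D.h0]
    | succ n ih =>
      intro hn
      have h := Hall n (by omega)
      rw [Prod.snd_sub] at h
      have := ih (by omega)
      omega
  have nb : ∀ i, i + 2 ≤ D.L → D.B (i+2) ≠ D.B i := by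
    intro i hi2 heq
    rcases Nat.lt_or_ge (i+2) D.L with h | h
    · have := D.hsimp (i+2) i (by omega) (by omega) (by rw [heq]) (by rw [heq]; simp)
      omega
    · have hiL : i + 2 = D.L := by omega
      have hBi : D.B i = (D.c, 0) := by rw [← heq, hiL, D.hE]
      have h0' := D.hsimp i 0 (by omega) (by omega)
        (by rw [hBi, D.h0])
        (by rw [hBi, D.h0]; simpa using D.hdc)
      rw [h0', D.h0] at hBi
      have hcc : D.c = 0 := by
        have := congrArg Prod.fst hBi
        simpa using this.symm
      rcases D.hcOr with hc' | hc' <;> omega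
  have hstepform : ∀ i, i < D.L → (D.B (i+1) - D.B i = (1,0) ∨ D.B (i+1) - D.B i = (-1,0)) :=
    fun i hi => horiz_form (D.hstep i hi) (Hall i hi)
  have hconst : ∀ i, i < D.L → D.B (i+1) - D.B i = D.B 1 - D.B 0 := by
    intro i
    induction i with
    | zero => intro _; rfl
    | succ n ih =>
      intro hn
      have h1 := ih (by omega)
      rcases hstepform n (by omega) with e1|e1 <;> rcases hstepform (n+1) (by omega) with e2|e2
      · rw [e2, ← e1]; exact h1
      · exfalso
        apply nb n (by omega)
        apply sub_eq_zero.mp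
        have e3 : D.B (n+2) - D.B n = (D.B (n+1+1) - D.B (n+1)) + (D.B (n+1) - D.B n) := by abel
        rw [e3, e1, e2]
        decide
      · exfalso
        apply nb n (by omega)
        apply sub_eq_zero.mp
        have e3 : D.B (n+2) - D.B n = (D.B (n+1+1) - D.B (n+1)) + (D.B (n+1) - D.B n) := by abel
        rw [e3, e1, e2]
        decide
      · rw [e2, ← e1]; exact h1
  have haff : ∀ i, i ≤ D.L → D.B i = ((i:ℤ) * (D.B 1 - D.B 0).1, 0) := by
    intro i
    induction i with
    | zero => intro _; rw [D.h0]; norm_num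
    | succ n ih =>
      intro hn
      have h1 := hconst n (by omega)
      have h2 := ih (by omega)
      have e3 : D.B (n+1) = (D.B (n+1) - D.B n) + D.B n := by abel
      rw [e3, h1, h2]
      have hv : (D.B 1 - D.B 0).2 = 0 := Hall 0 (by omega)
      rw [Prod.ext_iff]
      constructor
      · simp only [Prod.fst_add]
        push_cast; ring
      · simp only [Prod.snd_add]
        rw [hv]
        norm_num
  have hcL : D.c = (D.L:ℤ) * (D.B 1 - D.B 0).1 := by
    have hE2 := haff D.L le_rfl
    rw [D.hE] at hE2
    have := congrArg Prod.fst hE2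
    simpa using this
  have hσpm : (D.B 1 - D.B 0).1 = 1 ∨ (D.B 1 - D.B 0).1 = -1 := by
    rcases hstepform 0 (by omega) with e|e <;> rw [e] <;> [left; right] <;> rfl
  have he1 : (D.d.toNat:ℤ) = D.d := Int.toNat_of_nonneg (by omega)
  have heL : D.d.toNat < D.L := by
    have hLpos := D.hL0
    rcases D.hcOr with hc' | hc' <;> rcases hσpm with e|e <;> rw [e] at hcL <;> omega
  have hBd := haff D.d.toNat (by omega)
  have hBd1 : (D.B D.d.toNat).1 = (D.d.toNat:ℤ) * (D.B 1 - D.B 0).1 := by rw [hBd]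
  have e0 : (D.B 0).1 = 0 := by rw [D.h0]
  have := D.hsimp D.d.toNat 0 (by omega) (by omega)
    (by rw [rows D.d.toNat (by omega), rows 0 (by omega)])
    (by
      rw [hBd1, e0, he1]
      exact ⟨(D.B 1 - D.B 0).1, by ring⟩)
  omega

end Data

theorem core (D : Data) : False := by
  suffices H : ∀ n : ℕ, ∀ E : Data, E.L ≤ n → False from H D.L D le_rfl
  intro n
  induction n with
  | zero => intro E hE; have := E.hL; omega
  | succ n IH =>
    intro E hEL
    rcases Nat.lt_or_ge E.L 3 with hL | hL3
    · exact E.smallL_contra (by omega)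
    by_cases Hall : ∀ i, i < E.L → (E.B (i+1) - E.B i).2 = 0
    · exact E.allHoriz_contra hL3 Hall
    push_neg at Hall
    obtain ⟨ν, hνL, hν⟩ := Hall
    have hνs : (E.s ν).2 ≠ 0 := by rw [E.s_ofNat ν hνL]; exact hν
    by_cases HU : ∃ t : ℤ, E.s (t+2) = -(E.s t)
    · obtain ⟨t, ht⟩ := HU
      have hu : (E.rot t).B 3 - (E.rot t).B 2 = -((E.rot t).B 1 - (E.rot t).B 0) := by
        show (E.P (t+((3:ℕ):ℤ)) - E.P t) - (E.P (t+((2:ℕ):ℤ)) - E.P t)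
            = -((E.P (t+((1:ℕ):ℤ)) - E.P t) - (E.P (t+((0:ℕ):ℤ)) - E.P t))
        have e1 : (E.P (t+((3:ℕ):ℤ)) - E.P t) - (E.P (t+((2:ℕ):ℤ)) - E.P t) = E.s (t+2) := by
          rw [sub_sub_sub_cancel_right, show t + ((3:ℕ):ℤ) = (t+2)+1 by push_cast; ring,
            show t + ((2:ℕ):ℤ) = t+2 by push_cast; ring]
          rfl
        have e2 : (E.P (t+((1:ℕ):ℤ)) - E.P t) - (E.P (t+((0:ℕ):ℤ)) - E.P t) = E.s t := by
          rw [sub_sub_sub_cancel_right, show t + ((1:ℕ):ℤ) = t+1 by push_cast; ring,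
            show t + ((0:ℕ):ℤ) = t by push_cast; ring]
          rfl
        rw [e1, e2, ht]
      obtain ⟨D2, hD2⟩ := (E.rot t).surgery1_exists (by exact hL3) hu
      exact IH D2 (by have he : (E.rot t).L = E.L := rfl; omega)
    · push_neg at HU
      obtain ⟨t₀, w, σ, hcap, hmin⟩ := E.minCapExists hL3 hνs
      by_cases HB : E.Blocked t₀ w σ
      · exact E.descent hL3 HU hcap hmin HB
      · have hw := hcap.1
        have hσ := hcap.2.1
        have hwL : w + 2 < E.L := Data.cap_wL hcap
        have hrunv : ∀ j : ℕ, j ≤ w → (E.rot t₀).B (j+1) = (σ * j, 1) := by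
          intro j hj
          show E.P (t₀ + ((j+1:ℕ):ℤ)) - E.P t₀ = (σ * j, 1)
          obtain ⟨hv1, hv2⟩ := Data.cap_val hcap j hj
          rw [show t₀ + ((j+1:ℕ):ℤ) = t₀ + 1 + j by push_cast; ring]
          rw [Prod.ext_iff, Prod.fst_sub, Prod.snd_sub]
          constructor
          · rw [hv1]; simp; try ring
          · rw [hv2]; simp
        have hflankR : (E.rot t₀).B (w+2) = (σ * w, 0) := by
          show E.P (t₀ + ((w+2:ℕ):ℤ)) - E.P t₀ = (σ * w, 0)
          obtain ⟨hv1, hv2⟩ := Data.cap_valR hcap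
          rw [show t₀ + ((w+2:ℕ):ℤ) = t₀ + w + 2 by push_cast; ring]
          rw [Prod.ext_iff, Prod.fst_sub, Prod.snd_sub]
          constructor
          · rw [hv1]; simp; try ring
          · rw [hv2]; simp
        have hunb : ∀ m, m < (E.rot t₀).L → ((E.rot t₀).B m).2 = 0 →
            ∀ j : ℕ, 1 ≤ j → j < w → ¬ (E.rot t₀).d ∣ (((E.rot t₀).B m).1 - σ * j) := by
          intro mm hmm hrow0 j hj1 hjw hdvd
          apply HB
          refine ⟨t₀ + mm, j, hj1, hjw, ?_, ?_⟩
          · have h5 : ((E.P (t₀ + mm) - E.P t₀)).2 = 0 := hrow0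
            rw [Prod.snd_sub] at h5
            omega
          · have hd2 : E.d ∣ ((E.P (t₀ + mm) - E.P t₀).1 - σ * j) := hdvd
            rw [Prod.fst_sub] at hd2
            have e : (E.P (t₀ + mm)).1 - ((E.P t₀).1 + (j:ℤ) * σ)
                = ((E.P (t₀ + mm)).1 - (E.P t₀).1 - σ * j) := by ring
            rw [e]
            exact hd2
        obtain ⟨D2, hD2⟩ := (E.rot t₀).surgery2_exists w σ hw hσ hwL hrunv hflankR hunb
        exact IH D2 (by have he : (E.rot t₀).L = E.L := rfl; omega)

lemma isStep_neg {v : V} (h : IsStep v) : IsStep (-v) := by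
  apply isStep_of_comp
  have hc := h.cases
  rw [Prod.fst_neg, Prod.snd_neg]
  omega

theorem realize (d : ℤ) (hd : 1 ≤ d) :
    ∀ LL : ℕ, ∀ w : ℕ → V, ∀ c : ℤ, (∀ i, i < LL → IsStep (w (i+1) - w i)) →
      w LL - w 0 = (c, 0) → d ∣ c → 1 ≤ c →
      ∃ i j, i ≤ LL ∧ j ≤ LL ∧ w i - w j = (d, 0) := by
  intro LL
  induction LL using Nat.strong_induction_on with
  | _ LL IH =>
  intro w c hstep hend hdc hc
  by_cases hc1 : c = d
  · exact ⟨LL, 0, le_rfl, by omega, by rw [hend, hc1]⟩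
  have hc2 : 2*d ≤ c := by
    obtain ⟨k, hk⟩ := hdc
    have hk1 : 1 ≤ k := by
      by_contra hknot
      push_neg at hknot
      have h5 : d * k ≤ 0 := mul_nonpos_iff.mpr (Or.inl ⟨by omega, by omega⟩)
      omega
    have hk2 : k ≠ 1 := by rintro rfl; rw [mul_one] at hk; exact hc1 hk
    have h5 : 0 ≤ d * (k - 2) := mul_nonneg (by omega) (by omega)
    have h6 : d * (k - 2) = c - 2*d := by rw [hk]; ring
    omega
  by_cases HP : ∃ a b : ℕ, a < b ∧ b ≤ LL ∧ b - a < LL ∧ (w b - w a).2 = 0 ∧ d ∣ (w b - w a).1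
  · obtain ⟨a, b, hab, hbL, hablt, hrow, hdvd⟩ := HP
    rcases lt_trichotomy ((w b - w a).1) 0 with hneg | hzero | hpos
    · -- reversed subwalk from b down to a
      have hsub : ∃ i j, i ≤ b - a ∧ j ≤ b - a ∧
          (fun i => w (b - i)) i - (fun i => w (b - i)) j = (d, 0) := by
        apply IH (b-a) (by omega) _ (-(w b - w a).1)
        · intro i hi
          have e : (fun i => w (b - i)) (i+1) - (fun i => w (b - i)) i
              = -(w ((b - (i+1)) + 1) - w (b - (i+1))) := by
            show w (b - (i+1)) - w (b - i) = -(w ((b - (i+1)) + 1) - w (b - (i+1)))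
            rw [show b - i = (b - (i+1)) + 1 by omega]
            ring
          rw [e]
          exact isStep_neg (hstep (b - (i+1)) (by omega))
        · show w (b - (b-a)) - w (b - 0) = (-(w b - w a).1, 0)
          rw [show b - (b-a) = a by omega, show b - 0 = b by omega]
          rw [Prod.ext_iff]
          constructor
          · show (w a - w b).1 = -((w b - w a).1)
            rw [Prod.fst_sub, Prod.fst_sub]
            ring
          · show (w a - w b).2 = (0:ℤ)
            rw [Prod.snd_sub]
            rw [Prod.snd_sub] at hrow
            omega
        · exact dvd_neg.mpr hdvd
        · omega
      obtain ⟨i, j, hi, hj, he⟩ := hsub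
      exact ⟨b - i, b - j, by omega, by omega, he⟩
    · -- a loop : splice it out
      have hweq : w b = w a := by
        have h1 := hzero
        have h2 := hrow
        rw [Prod.fst_sub] at h1
        rw [Prod.snd_sub] at h2
        rw [Prod.ext_iff]
        omega
      have hsub : ∃ i j, i ≤ LL - (b-a) ∧ j ≤ LL - (b-a) ∧
          (fun i => if i ≤ a then w i else w (i + (b - a))) i
            - (fun i => if i ≤ a then w i else w (i + (b - a))) j = (d,0) := by
        apply IH (LL - (b-a)) (by omega) _ c _ _ hdc hc
        · intro i hi
          by_cases hia : i + 1 ≤ a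
          · simp only [if_pos hia, if_pos (by omega : i ≤ a)]
            exact hstep i (by omega)
          · by_cases hia2 : i ≤ a
            · have hia3 : i = a := by omega
              simp only [if_neg hia, if_pos hia2]
              subst hia3
              rw [show i + 1 + (b - i) = b + 1 by omega, ← hweq]
              exact hstep b (by omega)
            · simp only [if_neg hia, if_neg hia2]
              rw [show i + 1 + (b - a) = (i + (b-a)) + 1 by omega]
              exact hstep (i + (b-a)) (by omega)
        · by_cases hLa : LL - (b-a) ≤ a
          · -- then b = LL
            have hbLL : b = LL := by omega
            have ha' : LL - (b-a) = a := by omega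
            simp only [if_pos hLa, if_pos (by omega : (0:ℕ) ≤ a)]
            rw [ha', ← hweq, hbLL]
            exact hend
          · simp only [if_neg hLa, if_pos (by omega : (0:ℕ) ≤ a)]
            rw [show LL - (b-a) + (b - a) = LL by omega]
            exact hend
      obtain ⟨i, j, hi, hj, he⟩ := hsub
      try simp only at he
      by_cases h1 : i ≤ a <;> by_cases h2 : j ≤ a <;>
        simp only [if_pos, if_neg, h1, h2, if_true, if_false] at he
      · exact ⟨i, j, by omega, by omega, he⟩
      · exact ⟨i, j + (b-a), by omega, by omega, he⟩
      · exact ⟨i + (b-a), j, by omega, by omega, he⟩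
      · exact ⟨i + (b-a), j + (b-a), by omega, by omega, he⟩
    · -- forward subwalk
      have hsub : ∃ i j, i ≤ b - a ∧ j ≤ b - a ∧
          (fun i => w (a + i)) i - (fun i => w (a + i)) j = (d, 0) := by
        apply IH (b-a) (by omega) _ ((w b - w a).1)
        · intro i hi
          show IsStep (w (a + (i+1)) - w (a + i))
          rw [show a + (i+1) = (a+i) + 1 by omega]
          exact hstep (a+i) (by omega)
        · show w (a + (b-a)) - w (a + 0) = ((w b - w a).1, 0)
          rw [show a + (b-a) = b by omega, show a + 0 = a by omega]
          rw [Prod.ext_iff]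
          exact ⟨rfl, hrow⟩
        · exact hdvd
        · omega
      obtain ⟨i, j, hi, hj, he⟩ := hsub
      exact ⟨a + i, a + j, by omega, by omega, he⟩
  · push_neg at HP
    exfalso
    have hL1 : 1 ≤ LL := by
      by_contra h
      have hL0 : LL = 0 := by omega
      rw [hL0] at hend
      have := congrArg Prod.fst hend
      simp only [sub_self, Prod.fst_zero] at this
      omega
    refine core ⟨LL, d, c, fun i => w i - w 0, hL1, hd, hdc,
      by rw [abs_of_pos (by omega : (0:ℤ) < c)]; omega,
      by show w 0 - w 0 = ((0:ℤ),(0:ℤ)); rw [sub_self]; rfl, hend, ?_, ?_⟩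
    · intro i hi
      show IsStep ((w (i+1) - w 0) - (w i - w 0))
      rw [sub_sub_sub_cancel_right]
      exact hstep i hi
    · intro i j hi hj hrow hcol
      try simp only at hrow hcol
      rw [Prod.snd_sub, Prod.snd_sub] at hrow
      rw [Prod.fst_sub, Prod.fst_sub] at hcol
      by_contra hne
      rcases Nat.lt_or_ge i j with hij | hij
      · refine HP i j hij (by omega) (by omega) ?_ ?_
        · rw [Prod.snd_sub]; omega
        · rw [Prod.fst_sub]
          have e : (w j).1 - (w i).1 = -(((w i).1 - (w 0).1) - ((w j).1 - (w 0).1)) := by ring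
          rw [e]; exact dvd_neg.mpr hcol
      · have hji : j < i := by omega
        refine HP j i hji (by omega) (by omega) ?_ ?_
        · rw [Prod.snd_sub]; omega
        · rw [Prod.fst_sub]
          have e : (w i).1 - (w j).1 = ((w i).1 - (w 0).1) - ((w j).1 - (w 0).1) := by ring
          rw [e]; exact hcol

lemma unit_step_char (a b : ℤ) (h : a * a + b * b = 1) :
    (b = 0 ∧ (a = 1 ∨ a = -1)) ∨ (a = 0 ∧ (b = 1 ∨ b = -1)) := by
  have ha1 : -1 ≤ a := by nlinarith [sq_nonneg b, sq_nonneg (a+1)]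
  have ha2 : a ≤ 1 := by nlinarith [sq_nonneg b, sq_nonneg (a-1)]
  have hb1 : -1 ≤ b := by nlinarith [sq_nonneg a, sq_nonneg (b+1)]
  have hb2 : b ≤ 1 := by nlinarith [sq_nonneg a, sq_nonneg (b-1)]
  interval_cases a <;> interval_cases b <;> omega

end Stmt5

open Stmt5 in
/-- If d divides n then d ∈ A_n: every unit-step walk realizing the difference n
realizes the difference d. -/
theorem stmt_5 (n d : ℤ) (hn : 0 < n) (hd : 0 < d) (hdvd : d ∣ n)
    (l : ℕ) (z : ℕ → GaussianInt)
    (hstep : ∀ j < l, (z (j + 1) - z j).norm = 1)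
    (hreal : ∃ s t, s ≤ l ∧ t ≤ l ∧ z s - z t = (n : GaussianInt)) :
    ∃ u v, u ≤ l ∧ v ≤ l ∧ z u - z v = (d : GaussianInt) := by
  obtain ⟨s, t, hs, ht, hst⟩ := hreal
  have hstepc : ∀ j, j < l →
      ((z (j+1)).im - (z j).im = 0 ∧ ((z (j+1)).re - (z j).re = 1 ∨ (z (j+1)).re - (z j).re = -1))
      ∨ ((z (j+1)).re - (z j).re = 0 ∧ ((z (j+1)).im - (z j).im = 1 ∨ (z (j+1)).im - (z j).im = -1)) := by
    intro j hj
    have h := hstep j hj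
    rw [Zsqrtd.norm_def] at h
    have h2 : (z (j+1) - z j).re * (z (j+1) - z j).re
        + (z (j+1) - z j).im * (z (j+1) - z j).im = 1 := by linear_combination h
    have h3 := unit_step_char _ _ h2
    rw [Zsqrtd.re_sub, Zsqrtd.im_sub] at h3
    tauto
  have hre : (z s).re - (z t).re = n := by
    have := congrArg Zsqrtd.re hst
    rw [Zsqrtd.re_sub, Zsqrtd.re_intCast] at this
    exact this
  have him : (z s).im - (z t).im = 0 := by
    have := congrArg Zsqrtd.im hst
    rw [Zsqrtd.im_sub, Zsqrtd.im_intCast] at this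
    exact this
  rcases le_or_gt t s with hts | hst2
  · -- forward walk from t to s
    have key := realize d (by omega) (s - t) (fun i => (((z (t+i)).re, (z (t+i)).im) : V)) n
      ?_ ?_ hdvd (by omega)
    · obtain ⟨i, j, hi, hj, he⟩ := key
      refine ⟨t + i, t + j, by omega, by omega, ?_⟩
      have h1 := congrArg Prod.fst he
      have h2 := congrArg Prod.snd he
      rw [Prod.fst_sub] at h1
      rw [Prod.snd_sub] at h2
      simp only at h1 h2
      rw [Zsqrtd.ext_iff, Zsqrtd.re_sub, Zsqrtd.im_sub, Zsqrtd.re_intCast, Zsqrtd.im_intCast]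
      exact ⟨h1, h2⟩
    · intro i hi
      apply isStep_of_comp
      rw [Prod.fst_sub, Prod.snd_sub]
      simp only
      rw [show t + (i+1) = (t+i) + 1 by omega]
      have := hstepc (t+i) (by omega)
      tauto
    · show (((z (t+(s-t))).re, (z (t+(s-t))).im) : V) - ((z (t+0)).re, (z (t+0)).im) = (n, 0)
      rw [show t + (s - t) = s by omega, show t + 0 = t by omega]
      rw [Prod.ext_iff, Prod.fst_sub, Prod.snd_sub]
      exact ⟨hre, him⟩
  · -- reversed-negated walk from s
    have key := realize d (by omega) (t - s) (fun i => (((z s).re - (z (s+i)).re, (z s).im - (z (s+i)).im) : V)) n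
      ?_ ?_ hdvd (by omega)
    · obtain ⟨i, j, hi, hj, he⟩ := key
      refine ⟨s + j, s + i, by omega, by omega, ?_⟩
      have h1 := congrArg Prod.fst he
      have h2 := congrArg Prod.snd he
      rw [Prod.fst_sub] at h1
      rw [Prod.snd_sub] at h2
      simp only at h1 h2
      rw [Zsqrtd.ext_iff, Zsqrtd.re_sub, Zsqrtd.im_sub, Zsqrtd.re_intCast, Zsqrtd.im_intCast]
      constructor
      · omega
      · omega
    · intro i hi
      apply isStep_of_comp
      rw [Prod.fst_sub, Prod.snd_sub]
      simp only
      rw [show s + (i+1) = (s+i) + 1 by omega]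
      have := hstepc (s+i) (by omega)
      omega
    · show ((((z s).re - (z (s+(t-s))).re, (z s).im - (z (s+(t-s))).im)) : V)
          - ((z s).re - (z (s+0)).re, (z s).im - (z (s+0)).im) = (n, 0)
      rw [show s + (t - s) = t by omega, show s + 0 = s by omega]
      rw [Prod.ext_iff, Prod.fst_sub, Prod.snd_sub]
      constructor
      · simp only; omega
      · simp only; omega
end

section
/- Let n ≥ 1 and let k₁, k₂ be positive integers with k₁, k₂ < √(n/2) + 1/2. Suppose there exist a positive integer d and integers r₁, r₂ with n = k₁·d + r₁ = k₂·d + r₂, |r₁| ≤ k₁ - 1, and |r₂| ≤ k₂ - 1. Then k₁ = k₂. -/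
/-!
Eliminating `d` gives `(k₂ - k₁) n = k₂ r₁ - k₁ r₂`. The bound `k < √(n/2) + 1/2` means
`(2k - 1)² < 2n`, hence `2 (k₂ (k₁ - 1) + k₁ (k₂ - 1)) + 1 = (2k₁ - 1)(2k₂ - 1) < 2n`, so the
right-hand side is smaller than `n` in absolute value and must vanish.
-/

lemma sq_two_mul_sub_one_lt_of_lt_sqrt_half_add_half {x y : ℝ} (hx : 1 / 2 ≤ x)
    (h : x < √(y / 2) + 1 / 2) : (2 * x - 1) ^ 2 < 2 * y := by
  have hsq : (x - 1 / 2) ^ 2 < y / 2 := (Real.lt_sqrt (by linarith)).mp (by linarith)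
  linarith

lemma Int.mul_lt_of_sq_lt_of_sq_lt {a b N : ℤ} (ha : 0 ≤ a) (hb : 0 ≤ b)
    (ha' : a ^ 2 < N) (hb' : b ^ 2 < N) : a * b < N := by
  rcases le_total a b with hab | hab <;> nlinarith

theorem Int.eq_of_mul_add_eq_mul_add_of_abs_le {n k₁ k₂ d r₁ r₂ : ℤ}
    (hq₁ : (2 * k₁ - 1) ^ 2 < 2 * n) (hq₂ : (2 * k₂ - 1) ^ 2 < 2 * n)
    (h₁ : n = k₁ * d + r₁) (h₂ : n = k₂ * d + r₂)
    (hr₁ : |r₁| ≤ k₁ - 1) (hr₂ : |r₂| ≤ k₂ - 1) : k₁ = k₂ := by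
  have hk₁ : 0 < k₁ := by linarith [abs_nonneg r₁]
  have hk₂ : 0 < k₂ := by linarith [abs_nonneg r₂]
  have hcross : (k₂ - k₁) * n = k₂ * r₁ - k₁ * r₂ := by
    linear_combination k₂ * h₁ - k₁ * h₂
  have hprod : (2 * k₁ - 1) * (2 * k₂ - 1) < 2 * n :=
    Int.mul_lt_of_sq_lt_of_sq_lt (by linarith) (by linarith) hq₁ hq₂
  have hsmall : |(k₂ - k₁) * n| < n :=
    calc |(k₂ - k₁) * n| = |k₂ * r₁ - k₁ * r₂| := by rw [hcross]
      _ ≤ |k₂ * r₁| + |k₁ * r₂| := abs_sub _ _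
      _ = k₂ * |r₁| + k₁ * |r₂| := by rw [abs_mul, abs_mul, abs_of_pos hk₂, abs_of_pos hk₁]
      _ ≤ k₂ * (k₁ - 1) + k₁ * (k₂ - 1) := by gcongr
      _ < n := by linarith
  have hn : n ≠ 0 := by rintro rfl; simp at hsmall
  have hzero := Int.eq_zero_of_abs_lt_dvd (dvd_mul_left n (k₂ - k₁)) hsmall
  linarith [(mul_eq_zero.mp hzero).resolve_right hn]

theorem stmt_9_general (n : ℤ) (k₁ k₂ : ℤ)
    (hb₁ : (k₁ : ℝ) < Real.sqrt ((n : ℝ) / 2) + 1 / 2)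
    (hb₂ : (k₂ : ℝ) < Real.sqrt ((n : ℝ) / 2) + 1 / 2)
    (d : ℤ) (r₁ r₂ : ℤ)
    (h₁ : n = k₁ * d + r₁) (h₂ : n = k₂ * d + r₂)
    (hr₁ : |r₁| ≤ k₁ - 1) (hr₂ : |r₂| ≤ k₂ - 1) :
    k₁ = k₂ := by
  have hq : ∀ {k r : ℤ}, |r| ≤ k - 1 → (k : ℝ) < √((n : ℝ) / 2) + 1 / 2 →
      (2 * k - 1) ^ 2 < 2 * n := by
    intro k r hr hb
    have hk : (1 : ℝ) ≤ k := by exact_mod_cast (by linarith [abs_nonneg r] : 1 ≤ k)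
    exact_mod_cast sq_two_mul_sub_one_lt_of_lt_sqrt_half_add_half (by linarith) hb
  exact Int.eq_of_mul_add_eq_mul_add_of_abs_le (hq hr₁ hb₁) (hq hr₂ hb₂) h₁ h₂ hr₁ hr₂

/-- Distinct small quotients cannot arise from the same modulus. -/
theorem stmt_9 (n : ℤ) (hn : 1 ≤ n) (k₁ k₂ : ℤ) (hk₁ : 0 < k₁) (hk₂ : 0 < k₂)
    (hb₁ : (k₁ : ℝ) < Real.sqrt ((n : ℝ) / 2) + 1 / 2)
    (hb₂ : (k₂ : ℝ) < Real.sqrt ((n : ℝ) / 2) + 1 / 2)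
    (d : ℤ) (hd : 0 < d) (r₁ r₂ : ℤ)
    (h₁ : n = k₁ * d + r₁) (h₂ : n = k₂ * d + r₂)
    (hr₁ : |r₁| ≤ k₁ - 1) (hr₂ : |r₂| ≤ k₂ - 1) :
    k₁ = k₂ :=
  stmt_9_general n k₁ k₂ hb₁ hb₂ d r₁ r₂ h₁ h₂ hr₁ hr₂
end

section
/- For every positive integer n, the real interval [(n+1)/(√(2n)+1), √(n/2) + 1/2) contains at most one integer. -/
lemma Real.sqrt_div_two (x : ℝ) : √(x / 2) = √(2 * x) / 2 := by
  rw [show x / 2 = 2 * x / 2 ^ 2 by ring, Real.sqrt_div' _ (by positivity),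
    Real.sqrt_sq zero_le_two]

/-- With `s = √(2x)` the claim reads `(s² - 1) / 2 ≤ x + 1`, i.e. `x - 1/2 ≤ x + 1`. -/
lemma Real.sqrt_half_sub_half_le {x : ℝ} (hx : 0 ≤ x) :
    √(x / 2) - 1 / 2 ≤ (x + 1) / (√(2 * x) + 1) := by
  have hs : √(2 * x) ^ 2 = 2 * x := Real.sq_sqrt (by positivity)
  rw [Real.sqrt_div_two, le_div_iff₀ (by positivity)]
  nlinarith

/-- The interval [(n+1)/(√(2n)+1), √(n/2)+1/2) contains at most one integer. -/
theorem stmt_11 (n : ℤ) (hn : 0 < n) (a b : ℤ)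
    (ha1 : ((n : ℝ) + 1) / (Real.sqrt (2 * (n : ℝ)) + 1) ≤ (a : ℝ))
    (ha2 : (a : ℝ) < Real.sqrt ((n : ℝ) / 2) + 1 / 2)
    (hb1 : ((n : ℝ) + 1) / (Real.sqrt (2 * (n : ℝ)) + 1) ≤ (b : ℝ))
    (hb2 : (b : ℝ) < Real.sqrt ((n : ℝ) / 2) + 1 / 2) :
    a = b := by
  have hlow := Real.sqrt_half_sub_half_le (x := n) (by exact_mod_cast hn.le)
  -- with `u = √(n/2) + 1/2` the interval lies in `[u - 1, u)`, whose only integer is `⌈u - 1⌉`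
  have eq_ceil : ∀ c : ℤ, ((n : ℝ) + 1) / (√(2 * (n : ℝ)) + 1) ≤ c →
      (c : ℝ) < √((n : ℝ) / 2) + 1 / 2 → c = ⌈√((n : ℝ) / 2) - 1 / 2⌉ := fun c h1 h2 =>
    (Int.ceil_eq_iff.2 ⟨by linarith, by linarith⟩).symm
  rw [eq_ceil a ha1 ha2, eq_ceil b hb1 hb2]
end

section
/- Let n be a composite integer with n ≥ 14 and let d be the largest divisor of n satisfying d ≤ √(2n) - 1. Then d + 1 does not divide n. -/
/-!
If `d + 1` divided `n`, then, `d` and `d + 1` being coprime, `d (d + 1) ∣ n`, so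
`d (d + 1) ≤ n`. On the other hand `d + 1` is a divisor exceeding `d`, so by maximality
`d + 1 > √(2n) - 1`, and then `d (d + 1) > (√(2n) - 2)(√(2n) - 1) = 2n - 3√(2n) + 2 ≥ n`
as soon as `n ≥ 14`.
-/

theorem Nat.mul_add_one_dvd_of_dvd {d n : ℕ} (hd : d ∣ n) (hd' : d + 1 ∣ n) :
    d * (d + 1) ∣ n :=
  (Nat.coprime_self_add_right.mpr (Nat.coprime_one_right d)).mul_dvd_of_dvd_of_dvd hd hd'

theorem Real.lt_mul_add_one_of_sqrt_two_mul_sub_one_lt {x y : ℝ} (hx : 14 ≤ x)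
    (hy : √(2 * x) - 1 < y + 1) : x < y * (y + 1) := by
  set s := √(2 * x)
  have hs : s ^ 2 = 2 * x := Real.sq_sqrt (by linarith)
  have hs5 : 5 < s := by nlinarith [Real.sqrt_nonneg (2 * x)]
  -- `x + 2 ≥ 3 s` is `(x + 2) ^ 2 ≥ 18 x`, i.e. `x ^ 2 - 14 x + 4 ≥ 0`.
  have h3s : 3 * s ≤ x + 2 := by nlinarith
  calc x ≤ (s - 2) * (s - 1) := by nlinarith
    _ < y * (y + 1) := by nlinarith

theorem stmt_14_general (n : ℕ) (hn : 14 ≤ n)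
    (d : ℕ) (hdvd : d ∣ n)
    (hmax : ∀ e : ℕ, e ∣ n → (e : ℝ) ≤ Real.sqrt (2 * (n : ℝ)) - 1 → e ≤ d) :
    ¬ (d + 1) ∣ n := by
  intro hsucc
  have hgt : Real.sqrt (2 * (n : ℝ)) - 1 < (d : ℝ) + 1 := by
    by_contra! hle
    have := hmax (d + 1) hsucc (by exact_mod_cast hle)
    omega
  have hlt : n < d * (d + 1) := by
    exact_mod_cast Real.lt_mul_add_one_of_sqrt_two_mul_sub_one_lt (by exact_mod_cast hn) hgt
  have hle : d * (d + 1) ≤ n := Nat.le_of_dvd (by omega) (Nat.mul_add_one_dvd_of_dvd hdvd hsucc)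
  omega

/-- For composite n ≥ 14, if d is the largest divisor of n with d ≤ √(2n) - 1,
then d + 1 does not divide n. -/
theorem stmt_14 (n : ℕ) (hn : 14 ≤ n) (hnp : ¬ n.Prime)
    (d : ℕ) (hdvd : d ∣ n) (hdle : (d : ℝ) ≤ Real.sqrt (2 * (n : ℝ)) - 1)
    (hmax : ∀ e : ℕ, e ∣ n → (e : ℝ) ≤ Real.sqrt (2 * (n : ℝ)) - 1 → e ≤ d) :
    ¬ (d + 1) ∣ n :=
  stmt_14_general n hn d hdvd hmax
end

section
/- The set of positive integers n such that A_n equals the set of positive divisors of n is exactly {1, 2, 4, 6, 12}, where A_n = {d ∈ ℕ : d ≥ 1 and k(n,d) ≥ |r(n,d)| + 1} with n = k(n,d)·d + r(n,d) and r(n,d) ∈ [-⌊d/2⌋, ⌈d/2⌉-1]. -/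
/-!
The balanced division `n = k d + r` is unique, so `d ∈ A_n` is the decidable condition
`|r| + 1 ≤ k`. Every divisor lies in `A_n`, no `d > n` does, and every `d` with `d² ≤ 2n` does,
since `k ≤ |r|` would force `2n ≤ 2|r| d + 2r < d²`. If `A_n` consists of the divisors of `n`,
then `s = ⌊√(2n)⌋` and `s - 1` are coprime divisors of `n`, so `2s(s - 1) ≤ 2n < (s + 1)²`,
whence `s ≤ 4` and `n ≤ 12`; divisibility by `2` and `3` leaves `1, 2, 4, 6, 12`, which are checked
directly.
-/

def IsObstruction (n d : ℤ) : Prop :=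
  ∀ k r : ℤ, n = k * d + r → -(d / 2) ≤ r → r ≤ (d + 1) / 2 - 1 → k ≥ |r| + 1

/-- Shifting by `⌊d/2⌋` turns the balanced window `[-⌊d/2⌋, ⌈d/2⌉ - 1]` into `[0, d)`. -/
def balancedQuot (n d : ℤ) : ℤ := (n + d / 2) / d

def balancedRem (n d : ℤ) : ℤ := (n + d / 2) % d - d / 2

theorem eq_balancedQuot_and_eq_balancedRem {n d k r : ℤ} (hd : 0 < d) :
    k = balancedQuot n d ∧ r = balancedRem n d ↔
      n = k * d + r ∧ -(d / 2) ≤ r ∧ r ≤ (d + 1) / 2 - 1 := by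
  have hunique := Int.ediv_emod_unique (a := n + d / 2) (r := r + d / 2) (q := k) hd
  simp only [balancedQuot, balancedRem]
  constructor
  · rintro ⟨rfl, rfl⟩
    obtain ⟨hsum, hlo, hhi⟩ := hunique.1 ⟨rfl, by ring⟩
    exact ⟨by linarith, by omega, by omega⟩
  · rintro ⟨hn, hlo, hhi⟩
    obtain ⟨hq, hr⟩ := hunique.2 ⟨by rw [hn]; ring, by omega, by omega⟩
    exact ⟨hq.symm, by omega⟩

theorem isObstruction_iff {n d : ℤ} (hd : 0 < d) :
    IsObstruction n d ↔ |balancedRem n d| + 1 ≤ balancedQuot n d := by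
  constructor
  · intro h
    obtain ⟨hn, hlo, hhi⟩ :=
      (eq_balancedQuot_and_eq_balancedRem (n := n) (k := balancedQuot n d)
        (r := balancedRem n d) hd).1 ⟨rfl, rfl⟩
    exact h _ _ hn hlo hhi
  · intro h k r hn hlo hhi
    obtain ⟨rfl, rfl⟩ := (eq_balancedQuot_and_eq_balancedRem hd).2 ⟨hn, hlo, hhi⟩
    exact h

theorem isObstruction_of_dvd {n d : ℤ} (hn : 0 < n) (hd : 0 < d) (hdvd : d ∣ n) :
    IsObstruction n d := by
  intro k r hkr hlo hhi
  have hr : d ∣ r := by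
    have : r = n - k * d := by linarith
    rw [this]
    exact dvd_sub hdvd (dvd_mul_left d k)
  obtain rfl : r = 0 := Int.eq_zero_of_abs_lt_dvd hr (by rw [abs_lt]; omega)
  have hk : 0 < k * d := by linarith
  have := pos_of_mul_pos_left hk hd.le
  rw [abs_zero]
  omega

theorem isObstruction_of_mul_self_le {n d : ℤ} (hd : 0 < d) (hsq : d * d ≤ 2 * n) :
    IsObstruction n d := by
  intro k r hkr hlo hhi
  by_contra! hk
  have hkd : k * d ≤ |r| * d := mul_le_mul_of_nonneg_right (by omega) hd.le
  have hr_hi : 2 * r ≤ d - 1 := by omega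
  have hr_lo : -d ≤ 2 * r := by omega
  rcases abs_cases r with ⟨hr, hr0⟩ | ⟨hr, hr0⟩ <;> rw [hr] at hkd
  · nlinarith [mul_le_mul_of_nonneg_right hr_hi (by omega : (0 : ℤ) ≤ d + 1)]
  · nlinarith [mul_le_mul_of_nonneg_right hr_lo (by omega : (0 : ℤ) ≤ d - 1)]

theorem not_isObstruction_of_lt {n d : ℤ} (hn : 0 < n) (hdn : n < d) : ¬ IsObstruction n d := by
  intro h
  rcases le_or_gt d (2 * n) with hd | hd
  · have := h 1 (n - d) (by ring) (by omega) (by omega)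
    rw [abs_of_neg (by omega)] at this
    omega
  · have := h 0 n (by ring) (by omega) (by omega)
    rw [abs_of_pos hn] at this
    omega

theorem exists_mul_self_le_lt {m : ℤ} (hm : 0 ≤ m) :
    ∃ s : ℤ, 0 ≤ s ∧ s * s ≤ m ∧ m < (s + 1) * (s + 1) := by
  lift m to ℕ using hm
  exact ⟨m.sqrt, by positivity, by exact_mod_cast Nat.sqrt_le m,
    by exact_mod_cast Nat.lt_succ_sqrt m⟩

theorem le_twelve_of_forall_mul_self_le_dvd {n : ℤ} (hn : 0 < n)
    (h : ∀ d, 0 < d → d * d ≤ 2 * n → d ∣ n) : n ≤ 12 := by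
  obtain ⟨s, hs0, hsle, hlt⟩ := exists_mul_self_le_lt (m := 2 * n) (by omega)
  by_contra! hn12
  have hs : 5 ≤ s := by nlinarith
  have hprod : s * (s - 1) ∣ n :=
    IsCoprime.mul_dvd ⟨1, -1, by ring⟩ (h s (by omega) hsle) (h (s - 1) (by omega) (by nlinarith))
  have := Int.le_of_dvd hn hprod
  nlinarith

theorem isObstruction_iff_dvd_of_le {n d : ℤ} (hn : n ∈ ({1, 2, 4, 6, 12} : Set ℤ)) (hd : 0 < d)
    (hdn : d ≤ n) : IsObstruction n d ↔ d ∣ n := by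
  rw [isObstruction_iff hd]
  rcases hn with rfl | rfl | rfl | rfl | rfl <;> interval_cases d <;> decide

/-- A_n equals the set of positive divisors of n exactly for n ∈ {1, 2, 4, 6, 12}. -/
theorem stmt_15 :
    {n : ℤ | 0 < n ∧ ∀ d : ℤ, 0 < d →
        ((∀ k r : ℤ, n = k * d + r → -(d / 2) ≤ r → r ≤ (d + 1) / 2 - 1 →
            k ≥ |r| + 1) ↔ d ∣ n)} = {1, 2, 4, 6, 12} := by
  ext n
  change (0 < n ∧ ∀ d, 0 < d → (IsObstruction n d ↔ d ∣ n)) ↔ n ∈ ({1, 2, 4, 6, 12} : Set ℤ)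
  constructor
  · rintro ⟨hn, h⟩
    have hdvd d (hd : 0 < d) (hsq : d * d ≤ 2 * n) : d ∣ n :=
      (h d hd).1 (isObstruction_of_mul_self_le hd hsq)
    have := le_twelve_of_forall_mul_self_le_dvd hn hdvd
    have h2 := hdvd 2
    have h3 := hdvd 3
    simp only [Set.mem_insert_iff, Set.mem_singleton_iff]
    omega
  · intro hmem
    have hn : 0 < n := by rcases hmem with h | h | h | h | h <;> simp_all
    refine ⟨hn, fun d hd => ?_⟩
    rcases le_or_gt d n with hdn | hdn
    · exact isObstruction_iff_dvd_of_le hmem hd hdn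
    · exact iff_of_false (not_isObstruction_of_lt hn hdn) (fun hdvd => by
        have := Int.le_of_dvd hn hdvd; omega)
end

section
/- Let d ≥ 2 and let P₁ ⊂ ℤ × ℤ be the union over 0 ≤ m of the lattice points on: the vertical segment from (m(d+1), -m) to (m(d+1), d+1-m), the horizontal segment from (m(d+1), d+1-m) to ((m+1)(d-1), d+1-m), the vertical segment from ((m+1)(d-1), d+1-m) to ((m+1)(d-1), -m-1), and the horizontal segment from ((m+1)(d-1), -m-1) to ((m+1)(d+1), -m-1), where m ranges so that P₁ consists of R₀∪S₀∪T₀∪U₀∪⋯∪R_{(d-1)/2} if d is odd, and R₀∪S₀∪⋯∪R_{d/2-1}∪S_{d/2-1}∪T_{d/2-1} if d is even (with R_m, S_m, T_m, U_m the four segments above). Then no two points x, y ∈ P₁ satisfy x - y = (d, 0). -/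
/-! Each period `R_m ∪ S_m ∪ T_m ∪ U_m` of `P₁` is the translate by `(m(d+1), -m)` of one shape
whose second column has abscissa `c = d - 1 - 2m`. These shapes lie in vertical strips of width
`d + 1`, so two points at horizontal distance `d` lie in the same period or in consecutive ones. In
the first case the shape is narrower than `d` at every height; in the second the translates are
offset by `(d + 1, -1)`, so one asks for points of the shapes for `c - 2` and `c` differing by
`(-1, 1)`. Both cases are linear arithmetic. -/

/-- Lattice points of the vertical segment R_m of the path P₁. -/
def Rseg (d m : ℤ) : Set (ℤ × ℤ) :=
  {p | p.1 = m * (d + 1) ∧ -m ≤ p.2 ∧ p.2 ≤ d + 1 - m}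

/-- Lattice points of the horizontal segment S_m of the path P₁. -/
def Sseg (d m : ℤ) : Set (ℤ × ℤ) :=
  {p | p.2 = d + 1 - m ∧ m * (d + 1) ≤ p.1 ∧ p.1 ≤ (m + 1) * (d - 1)}

/-- Lattice points of the vertical segment T_m of the path P₁. -/
def Tseg (d m : ℤ) : Set (ℤ × ℤ) :=
  {p | p.1 = (m + 1) * (d - 1) ∧ -m - 1 ≤ p.2 ∧ p.2 ≤ d + 1 - m}

/-- Lattice points of the horizontal segment U_m of the path P₁. -/
def Useg (d m : ℤ) : Set (ℤ × ℤ) :=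
  {p | p.2 = -m - 1 ∧ (m + 1) * (d - 1) ≤ p.1 ∧ p.1 ≤ (m + 1) * (d + 1)}

/-- The avoiding staircase path P₁. -/
def P1 (d : ℤ) : Set (ℤ × ℤ) :=
  if Odd d then
    (⋃ m ∈ Set.Icc (0 : ℤ) ((d - 1) / 2), Rseg d m) ∪
    (⋃ m ∈ Set.Icc (0 : ℤ) ((d - 1) / 2 - 1), Sseg d m ∪ Tseg d m ∪ Useg d m)
  else
    (⋃ m ∈ Set.Icc (0 : ℤ) (d / 2 - 1), Rseg d m ∪ Sseg d m ∪ Tseg d m) ∪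
    (⋃ m ∈ Set.Icc (0 : ℤ) (d / 2 - 2), Useg d m)

/-- For `c = d - 1 - 2 * m`, the `m`-th period of `P1 d` translated by `(-m * (d + 1), m)`. The
guards on `c` cut the last period down to `R` (`d` odd) or to `R ∪ S ∪ T` (`d` even). -/
def stairCell (d c : ℤ) : Set (ℤ × ℤ) :=
  {q | (q.1 = 0 ∧ 0 ≤ q.2 ∧ q.2 ≤ d + 1) ∨
    (1 ≤ c ∧ q.2 = d + 1 ∧ 0 ≤ q.1 ∧ q.1 ≤ c) ∨
    (1 ≤ c ∧ q.1 = c ∧ -1 ≤ q.2 ∧ q.2 ≤ d + 1) ∨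
    (2 ≤ c ∧ q.2 = -1 ∧ c ≤ q.1 ∧ q.1 ≤ d + 1)}

lemma mem_stairCell_iff {d c : ℤ} {q : ℤ × ℤ} :
    q ∈ stairCell d c ↔ (q.1 = 0 ∧ 0 ≤ q.2 ∧ q.2 ≤ d + 1) ∨
      (1 ≤ c ∧ q.2 = d + 1 ∧ 0 ≤ q.1 ∧ q.1 ≤ c) ∨
      (1 ≤ c ∧ q.1 = c ∧ -1 ≤ q.2 ∧ q.2 ≤ d + 1) ∨
      (2 ≤ c ∧ q.2 = -1 ∧ c ≤ q.1 ∧ q.1 ≤ d + 1) :=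
  Iff.rfl

lemma fst_mem_Icc_of_mem_stairCell {d c : ℤ} (hc : c ≤ d + 1) {q : ℤ × ℤ}
    (hq : q ∈ stairCell d c) : q.1 ∈ Set.Icc 0 (d + 1) := by
  rw [mem_stairCell_iff] at hq
  rw [Set.mem_Icc]
  omega

lemma sub_ne_of_mem_stairCell {d c : ℤ} (hd : 0 < d) (hc : c < d) {a b : ℤ × ℤ}
    (ha : a ∈ stairCell d c) (hb : b ∈ stairCell d c) : a - b ≠ (d, 0) := by
  rw [mem_stairCell_iff] at ha hb
  rw [Ne, Prod.ext_iff, Prod.fst_sub, Prod.snd_sub]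
  omega

lemma sub_ne_of_mem_stairCell_sub_two {d c : ℤ} (hc : 2 ≤ c) {a b : ℤ × ℤ}
    (ha : a ∈ stairCell d (c - 2)) (hb : b ∈ stairCell d c) : a - b ≠ (-1, 1) := by
  rw [mem_stairCell_iff] at ha hb
  rw [Ne, Prod.ext_iff, Prod.fst_sub, Prod.snd_sub]
  omega

lemma shift_mem_stairCell {d m : ℤ} {p : ℤ × ℤ}
    (hp : p ∈ Rseg d m ∨ (2 * m + 2 ≤ d ∧ (p ∈ Sseg d m ∨ p ∈ Tseg d m)) ∨
      (2 * m + 3 ≤ d ∧ p ∈ Useg d m)) :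
    (p.1 - m * (d + 1), p.2 + m) ∈ stairCell d (d - 1 - 2 * m) := by
  have hT : (m + 1) * (d - 1) = m * (d + 1) + (d - 1 - 2 * m) := by ring
  have hU : (m + 1) * (d + 1) = m * (d + 1) + (d + 1) := by ring
  simp only [Rseg, Sseg, Tseg, Useg, Set.mem_ofPred_eq] at hp
  rw [mem_stairCell_iff]
  omega

lemma exists_shift_mem_stairCell {d : ℤ} {p : ℤ × ℤ} (hp : p ∈ P1 d) :
    ∃ m, 0 ≤ m ∧ 2 * m + 1 ≤ d ∧ (p.1 - m * (d + 1), p.2 + m) ∈ stairCell d (d - 1 - 2 * m) := by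
  unfold P1 at hp
  split_ifs at hp with hodd
  · obtain ⟨e, rfl⟩ := hodd
    simp only [Set.mem_union, Set.mem_iUnion, Set.mem_Icc, exists_prop] at hp
    rcases hp with ⟨m, hm, hR⟩ | ⟨m, hm, (hS | hT) | hU⟩
    · exact ⟨m, by omega, by omega, shift_mem_stairCell (.inl hR)⟩
    · exact ⟨m, by omega, by omega, shift_mem_stairCell (.inr (.inl ⟨by omega, .inl hS⟩))⟩
    · exact ⟨m, by omega, by omega, shift_mem_stairCell (.inr (.inl ⟨by omega, .inr hT⟩))⟩
    · exact ⟨m, by omega, by omega, shift_mem_stairCell (.inr (.inr ⟨by omega, hU⟩))⟩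
  · obtain ⟨e, rfl⟩ := Int.not_odd_iff_even.mp hodd
    simp only [Set.mem_union, Set.mem_iUnion, Set.mem_Icc, exists_prop] at hp
    rcases hp with ⟨m, hm, (hR | hS) | hT⟩ | ⟨m, hm, hU⟩
    · exact ⟨m, by omega, by omega, shift_mem_stairCell (.inl hR)⟩
    · exact ⟨m, by omega, by omega, shift_mem_stairCell (.inr (.inl ⟨by omega, .inl hS⟩))⟩
    · exact ⟨m, by omega, by omega, shift_mem_stairCell (.inr (.inl ⟨by omega, .inr hT⟩))⟩
    · exact ⟨m, by omega, by omega, shift_mem_stairCell (.inr (.inr ⟨by omega, hU⟩))⟩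

/-- No two points of P₁ differ by (d, 0). -/
theorem stmt_17 (d : ℤ) (hd : 2 ≤ d) :
    ∀ x ∈ P1 d, ∀ y ∈ P1 d, x - y ≠ ((d, 0) : ℤ × ℤ) := by
  intro x hx y hy hxy
  obtain ⟨n, hn, hnd, ha⟩ := exists_shift_mem_stairCell hx
  obtain ⟨m, hm, hmd, hb⟩ := exists_shift_mem_stairCell hy
  obtain ⟨hxy₁, hxy₂⟩ := Prod.ext_iff.mp hxy
  simp only [Prod.fst_sub, Prod.snd_sub] at hxy₁ hxy₂
  obtain ⟨ha₀, ha₁⟩ := fst_mem_Icc_of_mem_stairCell (by omega) ha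
  obtain ⟨hb₀, hb₁⟩ := fst_mem_Icc_of_mem_stairCell (by omega) hb
  have hlo : -1 * (d + 1) < (n - m) * (d + 1) := by rw [sub_mul]; omega
  have hhi : (n - m) * (d + 1) < 2 * (d + 1) := by rw [sub_mul]; omega
  have hnm₀ : -1 < n - m := lt_of_mul_lt_mul_right hlo (by omega)
  have hnm₁ : n - m < 2 := lt_of_mul_lt_mul_right hhi (by omega)
  obtain rfl | rfl : n = m ∨ n = m + 1 := by omega
  · refine sub_ne_of_mem_stairCell (by omega) (by omega) ha hb ?_
    ext <;> simp only [Prod.fst_sub, Prod.snd_sub] <;> omega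
  · rw [show d - 1 - 2 * (m + 1) = d - 1 - 2 * m - 2 by ring] at ha
    refine sub_ne_of_mem_stairCell_sub_two (by omega) ha hb ?_
    have : (m + 1) * (d + 1) = m * (d + 1) + (d + 1) := by ring
    ext <;> simp only [Prod.fst_sub, Prod.snd_sub] <;> omega
end

section
/- There exists a constant C such that for all positive integers n, the set A_n = {d ≥ 1 : k(n,d) ≥ |r(n,d)| + 1} (with n = k(n,d)·d + r(n,d), r(n,d) ∈ [-⌊d/2⌋, ⌈d/2⌉-1]) satisfies | |A_n| - 2√(2n) | ≤ C·(τ(n) + 1), where τ(n) is the number of divisors of n. -/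
/-!
Write `n = k d + r` for the balanced division. If `d (d + 1) < 2n`, the quotient exceeds
`d / 2 ≥ |r|`, so every `d < √(2n)` lies in `A_n`. If `d (d - 1) > 2n`, any `k` with `|n - k d| < k`
satisfies `2k < d`, so `(k, n - k d)` is already the balanced division: such a `d` lies in `A_n`
exactly when `d ∈ {⌊n/k⌋, ⌈n/k⌉}` for some `k`, which is then unique and at most about
`n / √(2n)`. Each `k` contributes two values of `d`, or one if `k ∣ n`, giving another
`√(2n) + O(τ(n))`; the `O(1)` values of `d` near `√(2n)` do not matter.
-/

namespace BalancedDivision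

def IsBalancedRep (n d k r : ℤ) : Prop :=
  n = k * d + r ∧ -(d / 2) ≤ r ∧ r ≤ (d + 1) / 2 - 1

theorem exists_isBalancedRep (n : ℤ) {d : ℤ} (hd : 0 < d) : ∃ k r, IsBalancedRep n d k r := by
  refine ⟨(n + d / 2) / d, n - (n + d / 2) / d * d, by ring, ?_⟩
  have hdiv := Int.mul_ediv_add_emod (n + d / 2) d
  have hlo := Int.emod_nonneg (n + d / 2) hd.ne'
  have hhi := Int.emod_lt_of_pos (n + d / 2) hd
  rw [mul_comm] at hdiv
  constructor <;> omega

theorem IsBalancedRep.unique {n d k r k' r' : ℤ} (h : IsBalancedRep n d k r)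
    (h' : IsBalancedRep n d k' r') : k = k' ∧ r = r' := by
  obtain ⟨hn, hlo, hhi⟩ := h
  obtain ⟨hn', hlo', hhi'⟩ := h'
  have hd : 0 < d := by omega
  have hdvd : d ∣ r - r' := ⟨k' - k, by linarith⟩
  have hr : r = r' := by
    linarith [Int.eq_zero_of_abs_lt_dvd hdvd (abs_lt.2 ⟨by omega, by omega⟩)]
  exact ⟨mul_right_cancel₀ hd.ne' (by linarith), hr⟩

def A (n : ℕ) : Set ℕ :=
  {d : ℕ | 1 ≤ d ∧ ∀ k r : ℤ, (n : ℤ) = k * d + r →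
      -((d : ℤ) / 2) ≤ r → r ≤ ((d : ℤ) + 1) / 2 - 1 → k ≥ |r| + 1}

theorem mem_A_iff {n d : ℕ} :
    d ∈ A n ↔ 1 ≤ d ∧ ∀ k r, IsBalancedRep n d k r → |r| + 1 ≤ k := by
  simp only [A, IsBalancedRep, Set.mem_ofPred_eq, and_imp, ge_iff_le]

theorem mem_Icc_div_ceilDiv {n k d : ℕ} (hk : 0 < k) :
    d ∈ Finset.Icc (n / k) (n ⌈/⌉ k) ↔ k * d < n + k ∧ n < k * d + k := by
  rw [Finset.mem_Icc, Nat.ceilDiv_eq_add_pred_div, ← Nat.lt_succ_iff,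
    Nat.div_lt_iff_lt_mul hk, Nat.le_div_iff_mul_le hk, Nat.succ_mul, mul_comm d k]
  omega

theorem mem_A_of_mul_succ_lt {n d : ℕ} (hd : 1 ≤ d) (h : d * (d + 1) < 2 * n) : d ∈ A n := by
  refine mem_A_iff.2 ⟨hd, fun k r ⟨hrep, hlo, hhi⟩ => ?_⟩
  have h' : (d : ℤ) * (d + 1) < 2 * n := by exact_mod_cast h
  have hk : (d : ℤ) < 2 * k := by
    by_contra! hk
    have h2r : 2 * r ≤ d - 1 := by omega
    nlinarith [mul_le_mul_of_nonneg_right hk (Nat.cast_nonneg (α := ℤ) d)]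
  have : |r| ≤ k - 1 := abs_le.2 ⟨by omega, by omega⟩
  omega

theorem exists_mem_Icc_of_mem_A {n d : ℕ} (hd : d ∈ A n) :
    ∃ k, 0 < k ∧ d ∈ Finset.Icc (n / k) (n ⌈/⌉ k) := by
  obtain ⟨hd1, hA⟩ := mem_A_iff.1 hd
  obtain ⟨k, r, hrep⟩ := exists_isBalancedRep n (d := d) (by omega)
  have hk := hA k r hrep
  have hr := abs_lt.1 (show |r| < k by omega)
  obtain ⟨k, rfl⟩ := Int.eq_ofNat_of_zero_le (show 0 ≤ k by omega)
  have hn := hrep.1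
  refine ⟨k, by omega, (mem_Icc_div_ceilDiv (by omega)).2 ⟨?_, ?_⟩⟩ <;> zify <;> omega

theorem A_subset_Icc (n : ℕ) : A n ⊆ Set.Icc 1 n := by
  intro d hd
  obtain ⟨k, hk, hdk⟩ := exists_mem_Icc_of_mem_A hd
  have hkn : n ⌈/⌉ k ≤ n := (ceilDiv_le_iff_le_mul hk).2 (Nat.le_mul_of_pos_left n hk)
  exact ⟨(mem_A_iff.1 hd).1, (Finset.mem_Icc.1 hdk).2.trans hkn⟩

theorem isBalancedRep_of_mem_Icc {n d k : ℕ} (hbig : 2 * n + d < d * d) (hk : 0 < k)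
    (hd : d ∈ Finset.Icc (n / k) (n ⌈/⌉ k)) :
    IsBalancedRep n d k (n - k * d) ∧ |(n : ℤ) - k * d| + 1 ≤ k := by
  obtain ⟨h1, h2⟩ := (mem_Icc_div_ceilDiv hk).1 hd
  zify at hbig h1 h2
  have h2k : 2 * (k : ℤ) < d := by
    by_contra! h
    nlinarith
  have := abs_lt.2 (show -(k : ℤ) < n - k * d ∧ (n : ℤ) - k * d < k by omega)
  exact ⟨⟨by ring, by omega, by omega⟩, by omega⟩

theorem mem_A_of_mem_Icc {n d k : ℕ} (hbig : 2 * n + d < d * d) (hk : 0 < k)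
    (hd : d ∈ Finset.Icc (n / k) (n ⌈/⌉ k)) : d ∈ A n := by
  obtain ⟨hrep, hlt⟩ := isBalancedRep_of_mem_Icc hbig hk hd
  refine mem_A_iff.2 ⟨by nlinarith, fun k' r' h' => ?_⟩
  obtain ⟨rfl, rfl⟩ := hrep.unique h'
  exact hlt

theorem eq_of_mem_Icc {n d k k' : ℕ} (hbig : 2 * n + d < d * d) (hk : 0 < k) (hk' : 0 < k')
    (hd : d ∈ Finset.Icc (n / k) (n ⌈/⌉ k)) (hd' : d ∈ Finset.Icc (n / k') (n ⌈/⌉ k')) :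
    k = k' := by
  exact_mod_cast ((isBalancedRep_of_mem_Icc hbig hk hd).1.unique
    (isBalancedRep_of_mem_Icc hbig hk' hd').1).1


theorem card_Icc_div_ceilDiv_add {n k : ℕ} (hk : 0 < k) :
    (Finset.Icc (n / k) (n ⌈/⌉ k)).card + (if k ∣ n then 1 else 0) = 2 := by
  have hdm := Nat.div_add_mod n k
  have hmod := Nat.mod_lt n hk
  rw [Nat.card_Icc, Nat.ceilDiv_eq_add_pred_div]
  split_ifs with hdvd
  · have hz := Nat.mod_eq_zero_of_dvd hdvd
    rw [Nat.div_eq_of_lt_le (k := n / k) (by rw [mul_comm]; omega) (by rw [Nat.succ_mul, mul_comm]; omega)]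
    omega
  · have hz : n % k ≠ 0 := fun h => hdvd (Nat.dvd_of_mod_eq_zero h)
    rw [Nat.div_eq_of_lt_le (k := n / k + 1) (by rw [Nat.succ_mul, mul_comm]; omega)
      (by rw [Nat.succ_mul, Nat.succ_mul, mul_comm]; omega)]
    omega

theorem two_mul_le_sum_card_Icc_add_card_divisors {n : ℕ} (hn : n ≠ 0) (K : ℕ) :
    2 * K ≤ ∑ k ∈ Finset.Icc 1 K, (Finset.Icc (n / k) (n ⌈/⌉ k)).card + n.divisors.card := by
  have hsum : ∑ k ∈ Finset.Icc 1 K,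
      ((Finset.Icc (n / k) (n ⌈/⌉ k)).card + if k ∣ n then 1 else 0) = 2 * K := by
    rw [Finset.sum_congr rfl fun k hk => card_Icc_div_ceilDiv_add (Finset.mem_Icc.1 hk).1]
    simp [mul_comm]
  rw [Finset.sum_add_distrib, ← Finset.card_filter] at hsum
  have hdiv : ((Finset.Icc 1 K).filter (· ∣ n)).card ≤ n.divisors.card :=
    Finset.card_le_card fun k hk => Nat.mem_divisors.2 ⟨(Finset.mem_filter.1 hk).2, hn⟩
  omega

theorem ncard_A_le (n : ℕ) {m : ℕ} (hm : 0 < m) : (A n).ncard ≤ m + 2 * (n / m) := by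
  let F := Finset.Icc 1 m ∪ (Finset.Icc 1 (n / m)).biUnion fun k => Finset.Icc (n / k) (n ⌈/⌉ k)
  have hsub : A n ⊆ F := by
    intro d hd
    rcases le_or_gt d m with hdm | hdm
    · exact Finset.mem_union_left _ (Finset.mem_Icc.2 ⟨(mem_A_iff.1 hd).1, hdm⟩)
    obtain ⟨k, hk, hdk⟩ := exists_mem_Icc_of_mem_A hd
    have h1 := ((mem_Icc_div_ceilDiv hk).1 hdk).1
    have hkm : k ≤ n / m := (Nat.le_div_iff_mul_le hm).2 (by nlinarith)
    exact Finset.mem_union_right _ (Finset.mem_biUnion.2 ⟨k, Finset.mem_Icc.2 ⟨hk, hkm⟩, hdk⟩)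
  have hcard : ∀ k ∈ Finset.Icc 1 (n / m), (Finset.Icc (n / k) (n ⌈/⌉ k)).card ≤ 2 :=
    fun k hk => by have := card_Icc_div_ceilDiv_add (n := n) (Finset.mem_Icc.1 hk).1; omega
  calc (A n).ncard ≤ F.card := by simpa using Set.ncard_le_ncard hsub
    _ ≤ m + 2 * (n / m) := by
      refine (Finset.card_union_le _ _).trans (add_le_add (by simp) ?_)
      refine Finset.card_biUnion_le.trans ((Finset.sum_le_sum hcard).trans ?_)
      simp [mul_comm]


theorem two_mul_add_lt_mul_self {n d : ℕ} (hd : Nat.sqrt (2 * n) + 2 ≤ d) :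
    2 * n + d < d * d := by
  have := Nat.lt_succ_sqrt' (2 * n)
  nlinarith

theorem mul_succ_lt_of_lt_sqrt {n d : ℕ} (hd : d < Nat.sqrt (2 * n)) : d * (d + 1) < 2 * n := by
  have := Nat.sqrt_le' (2 * n)
  nlinarith

theorem le_ncard_A_add_card_divisors {n : ℕ} (hn : n ≠ 0) :
    Nat.sqrt (2 * n) + 2 * (n / (Nat.sqrt (2 * n) + 2)) ≤ (A n).ncard + n.divisors.card + 1 := by
  set s := Nat.sqrt (2 * n)
  set K := n / (s + 2)
  let I : ℕ → Finset ℕ := fun k => Finset.Icc (n / k) (n ⌈/⌉ k)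
  have hlarge : ∀ k ∈ Finset.Icc 1 K, ∀ d ∈ I k, s + 2 ≤ d := by
    intro k hk d hd
    obtain ⟨hk1, hkK⟩ := Finset.mem_Icc.1 hk
    have h2 := ((mem_Icc_div_ceilDiv hk1).1 hd).2
    have := (Nat.le_div_iff_mul_le (by omega)).1 hkK
    nlinarith
  have hdisj : (Finset.Icc 1 K : Set ℕ).PairwiseDisjoint I := by
    intro k hk k' hk' hne
    refine Finset.disjoint_left.2 fun d hd hd' => hne ?_
    exact eq_of_mem_Icc (two_mul_add_lt_mul_self (hlarge k hk d hd))
      (Finset.mem_Icc.1 hk).1 (Finset.mem_Icc.1 hk').1 hd hd'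
  have hsmall : Disjoint (Finset.Icc 1 (s - 1)) ((Finset.Icc 1 K).biUnion I) := by
    refine Finset.disjoint_left.2 fun d hd hd' => ?_
    obtain ⟨k, hk, hdk⟩ := Finset.mem_biUnion.1 hd'
    have := hlarge k hk d hdk
    have := Finset.mem_Icc.1 hd
    omega
  let G := Finset.Icc 1 (s - 1) ∪ (Finset.Icc 1 K).biUnion I
  have hGA : ↑G ⊆ A n := by
    intro d hd
    rcases Finset.mem_union.1 hd with hd | hd
    · obtain ⟨hd1, hds⟩ := Finset.mem_Icc.1 hd
      exact mem_A_of_mul_succ_lt hd1 (mul_succ_lt_of_lt_sqrt (by omega))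
    · obtain ⟨k, hk, hdk⟩ := Finset.mem_biUnion.1 hd
      exact mem_A_of_mem_Icc (two_mul_add_lt_mul_self (hlarge k hk d hdk))
        (Finset.mem_Icc.1 hk).1 hdk
  have hGcard : G.card = s - 1 + ∑ k ∈ Finset.Icc 1 K, (I k).card := by
    rw [Finset.card_union_of_disjoint hsmall, Finset.card_biUnion hdisj, Nat.card_Icc]
    omega
  have hGle : G.card ≤ (A n).ncard := by
    simpa using Set.ncard_le_ncard hGA ((Set.finite_Icc 1 n).subset (A_subset_Icc n))
  have hsum : 2 * K ≤ ∑ k ∈ Finset.Icc 1 K, (I k).card + n.divisors.card :=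
    two_mul_le_sum_card_Icc_add_card_divisors hn K
  omega

theorem two_mul_div_le_sqrt (n : ℕ) :
    ((2 * (n / (Nat.sqrt (2 * n) + 1)) : ℕ) : ℝ) ≤ √(2 * n) := by
  have hq : (((n / (Nat.sqrt (2 * n) + 1)) * (Nat.sqrt (2 * n) + 1) : ℕ) : ℝ) ≤ n := by
    exact_mod_cast Nat.div_mul_le_self _ _
  have hx := Real.real_sqrt_lt_nat_sqrt_succ (a := 2 * n)
  have hsq := Real.sq_sqrt (show (0 : ℝ) ≤ 2 * n by positivity)
  push_cast at hq hx ⊢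
  nlinarith [Real.sqrt_nonneg (2 * (n : ℝ)), Nat.cast_nonneg (α := ℝ) (n / (Nat.sqrt (2 * n) + 1))]

theorem sqrt_sub_four_le_two_mul_div (n : ℕ) :
    √(2 * n) - 4 ≤ ((2 * (n / (Nat.sqrt (2 * n) + 2)) : ℕ) : ℝ) := by
  have hq : (n : ℝ) < ((Nat.sqrt (2 * n) + 2) * (n / (Nat.sqrt (2 * n) + 2) + 1) : ℕ) := by
    exact_mod_cast Nat.lt_mul_div_succ n (Nat.succ_pos _)
  have hx := Real.nat_sqrt_le_real_sqrt (a := 2 * n)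
  have hsq := Real.sq_sqrt (show (0 : ℝ) ≤ 2 * n by positivity)
  push_cast at hq hx ⊢
  nlinarith [Real.sqrt_nonneg (2 * (n : ℝ)), Nat.cast_nonneg (α := ℝ) (n / (Nat.sqrt (2 * n) + 2))]

theorem abs_ncard_A_sub_le {n : ℕ} (hn : n ≠ 0) :
    |((A n).ncard : ℝ) - 2 * √(2 * n)| ≤ 6 * ((n.divisors.card : ℝ) + 1) := by
  have hup : ((A n).ncard : ℝ) ≤
      Nat.sqrt (2 * n) + 1 + ((2 * (n / (Nat.sqrt (2 * n) + 1)) : ℕ) : ℝ) := by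
    exact_mod_cast ncard_A_le n (Nat.succ_pos _)
  have hlow : (Nat.sqrt (2 * n) : ℝ) + ((2 * (n / (Nat.sqrt (2 * n) + 2)) : ℕ) : ℝ) ≤
      (A n).ncard + n.divisors.card + 1 := by
    exact_mod_cast le_ncard_A_add_card_divisors hn
  have hs := Real.nat_sqrt_le_real_sqrt (a := 2 * n)
  have hs' := Real.real_sqrt_lt_nat_sqrt_succ (a := 2 * n)
  have h1 := two_mul_div_le_sqrt n
  have h2 := sqrt_sub_four_le_two_mul_div n
  push_cast at hs hs'
  rw [abs_le]
  constructor <;> linarith [Nat.cast_nonneg (α := ℝ) n.divisors.card]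

end BalancedDivision

/-- Quantitative form of |A_n| = 2√(2n) + O(nᵉ): the cardinality of A_n differs
from 2√(2n) by at most a constant multiple of τ(n) + 1. -/
theorem stmt_18 :
    ∃ C : ℝ, ∀ n : ℕ, 0 < n →
      |(({d : ℕ | 1 ≤ d ∧ ∀ k r : ℤ, (n : ℤ) = k * d + r →
            -((d : ℤ) / 2) ≤ r → r ≤ ((d : ℤ) + 1) / 2 - 1 →
            k ≥ |r| + 1}.ncard : ℝ)) - 2 * Real.sqrt (2 * (n : ℝ))| ≤
        C * ((n.divisors.card : ℝ) + 1) :=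
  ⟨6, fun _ hn => BalancedDivision.abs_ncard_A_sub_le hn.ne'⟩
end
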